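/- arXiv:1907.03392 — 4 statements merged into one kernel-verified Lean document; each statement's English description precedes it below -/
import Mathlib

section
/- Let n ≥ 2, k ≥ 1, p > 1. There exists a constant c > 0, depending only on n and p, with the following property. Let B_r = B_r(x₀) ⊂ ℝⁿ be a ball with 0 < r ≤ 1, let f : B_r → ℝᵏ be measurable with ∫_{B_r} |f|^p dx < ∞, let α ∈ (0,1], S ≥ 1, K ≥ 1, and let B_ρ = B_ρ(x₀) be a concentric ball with 0 < ρ < r. Assume that (∫_{B_ρ} |f(x+h) − f(x)|^p dx)^{1/p} ≤ S |h|^α for every h ∈ ℝⁿ with 0 < |h| ≤ (r − ρ)/K. Then for every β ∈ (0, α) one has ‖f‖_{L^p(B_ρ)} + [f]_{β,p;B_ρ} ≤ (c/(α − β)^{1/p}) ((r − ρ)/K)^{α − β} S + c (K/(r − ρ))^{n/p + β} ‖f‖_{L^p(B_r)}. -/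
open MeasureTheory Metric ENNReal
open scoped NNReal

/-- The `L^p` norm of `f` on a set `U`, `(∫_U |f|^p dx)^{1/p}`. -/
noncomputable def lpNormOn {n k : ℕ} (p : ℝ) (U : Set (EuclideanSpace ℝ (Fin n)))
    (f : EuclideanSpace ℝ (Fin n) → EuclideanSpace ℝ (Fin k)) : ℝ :=
  (∫ x in U, ‖f x‖ ^ p) ^ (1 / p)

/-- The Gagliardo seminorm `[f]_{β,p;U} = (∫_U ∫_U |f(x)−f(y)|^p/|x−y|^{n+βp} dx dy)^{1/p}`. -/
noncomputable def gagliardo {n k : ℕ} (β p : ℝ) (U : Set (EuclideanSpace ℝ (Fin n)))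
    (f : EuclideanSpace ℝ (Fin n) → EuclideanSpace ℝ (Fin k)) : ℝ :=
  (∫ x in U, ∫ y in U, ‖f x - f y‖ ^ p / dist x y ^ ((n : ℝ) + β * p)) ^ (1 / p)

section aux

lemma geom_inv_bound {p t : ℝ} (hp : 1 < p) (ht : 0 < t) (htp : t ≤ p) :
    (1 - ((2:ℝ)⁻¹) ^ t)⁻¹ ≤ ((1 + p * Real.log 2) / Real.log 2) / t := by
  have hlog : 0 < Real.log 2 := Real.log_pos one_lt_two
  set u := t * Real.log 2 with hu
  have hupos : 0 < u := mul_pos ht hlog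
  have hqe : ((2:ℝ)⁻¹) ^ t = Real.exp (-u) := by
    rw [Real.rpow_def_of_pos (by norm_num : (0:ℝ) < 2⁻¹), Real.log_inv, hu]
    ring_nf
  have h1 : ((2:ℝ)⁻¹) ^ t ≤ (1 + u)⁻¹ := by
    rw [hqe, Real.exp_neg]
    have := Real.add_one_le_exp u
    have h2 : (0:ℝ) < u + 1 := by linarith
    calc (Real.exp u)⁻¹ ≤ (u + 1)⁻¹ := by
          apply inv_anti₀ h2 this
      _ = (1 + u)⁻¹ := by ring_nf
  have hup : u ≤ p * Real.log 2 := by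
    rw [hu]; exact mul_le_mul_of_nonneg_right htp hlog.le
  have key : t / ((1 + p * Real.log 2) / Real.log 2) ≤ 1 - ((2:ℝ)⁻¹) ^ t := by
    have e1 : t / ((1 + p * Real.log 2) / Real.log 2) = u / (1 + p * Real.log 2) := by
      rw [div_div_eq_mul_div, hu]
    rw [e1]
    have e2 : (1:ℝ) - (1 + u)⁻¹ = u / (1 + u) := by
      field_simp
      ring
    have h3 : u / (1 + p * Real.log 2) ≤ u / (1 + u) := by
      apply div_le_div_of_nonneg_left hupos.le (by linarith) (by linarith)
    have h4 : u / (1 + u) ≤ 1 - ((2:ℝ)⁻¹) ^ t := by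
      rw [← e2]; linarith
    linarith
  have hpos : 0 < t / ((1 + p * Real.log 2) / Real.log 2) := by
    apply div_pos ht (div_pos (by positivity) hlog)
  calc (1 - ((2:ℝ)⁻¹) ^ t)⁻¹ ≤ (t / ((1 + p * Real.log 2) / Real.log 2))⁻¹ :=
        inv_anti₀ hpos key
    _ = ((1 + p * Real.log 2) / Real.log 2) / t := by rw [inv_div]

lemma radial_bound (n : ℕ) (hn : 1 ≤ n) {p t d : ℝ} (hp : 1 < p) (ht : 0 < t) (htp : t ≤ p)
    (hd : 0 < d) :
    (∫⁻ h in ball (0 : EuclideanSpace ℝ (Fin n)) d, ENNReal.ofReal (‖h‖ ^ (t - n)))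
      ≤ ENNReal.ofReal ((2:ℝ)^n * d ^ t * (((1 + p * Real.log 2) / Real.log 2) / t)) *
        volume (ball (0 : EuclideanSpace ℝ (Fin n)) 1) := by
  haveI : Nonempty (Fin n) := ⟨⟨0, hn⟩⟩
  set E := EuclideanSpace ℝ (Fin n)
  set R : ℕ → ℝ := fun j => d * 2⁻¹ ^ j with hR
  have hRpos : ∀ j, 0 < R j := fun j => by positivity
  set A : ℕ → Set E := fun j => ball (0:E) (R j) \ ball (0:E) (R (j+1)) with hA
  set F : E → ℝ≥0∞ := fun h => ENNReal.ofReal (‖h‖ ^ (t - n)) with hF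
  have step0 : (∫⁻ h in ball (0:E) d, F h) = ∫⁻ h in ball (0:E) d \ {0}, F h := by
    have h0 : volume (ball (0:E) d ∩ {(0:E)}) = 0 :=
      measure_mono_null Set.inter_subset_right (measure_singleton _)
    have heq : (ball (0:E) d \ {0} : Set E) =ᵐ[volume] ball (0:E) d :=
      diff_ae_eq_self.mpr h0
    exact (setLIntegral_congr heq).symm
  have hsub : ball (0:E) d \ {0} ⊆ ⋃ j, A j := by
    intro h hh
    obtain ⟨hhd, hh0⟩ := hh
    have hnorm : 0 < ‖h‖ := by
      exact norm_pos_iff.mpr (by simpa using hh0)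
    rw [mem_ball_zero_iff] at hhd
    have hex : ∃ j, R (j + 1) ≤ ‖h‖ := by
      obtain ⟨m, hm⟩ := exists_pow_lt_of_lt_one (div_pos hnorm hd) (by norm_num : (2:ℝ)⁻¹ < 1)
      refine ⟨m, ?_⟩
      have h1 : d * 2⁻¹ ^ m < ‖h‖ := by
        rw [mul_comm, ← lt_div_iff₀ hd]; exact hm
      have h2 : R (m + 1) ≤ R m := by
        simp only [hR, pow_succ]
        nlinarith [pow_pos (by norm_num : (0:ℝ) < 2⁻¹) m]
      exact h2.trans h1.le
    refine Set.mem_iUnion.mpr ⟨Nat.find hex, ?_, ?_⟩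
    · rw [mem_ball_zero_iff]
      rcases Nat.eq_zero_or_pos (Nat.find hex) with h0 | hjpos
      · rw [h0]; simpa [hR] using hhd
      · obtain ⟨j', hj'⟩ := Nat.exists_eq_succ_of_ne_zero (Nat.pos_iff_ne_zero.mp hjpos)
        have hmin := Nat.find_min hex (m := j') (by omega)
        push_neg at hmin
        rw [hj']
        exact hmin
    · intro hc
      rw [mem_ball_zero_iff] at hc
      exact absurd (Nat.find_spec hex) (not_le.mpr hc)
  have step2 : ∀ j, (∫⁻ h in A j, F h)
      ≤ ENNReal.ofReal ((2:ℝ)^n * d ^ t * ((2⁻¹:ℝ)^t)^j) * volume (ball (0:E) 1) := by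
    intro j
    have hb : ∀ h ∈ A j, F h ≤ ENNReal.ofReal ((2:ℝ)^n * (R j)^(t - n)) := by
      intro h hh
      obtain ⟨h1, h2⟩ := hh
      rw [mem_ball_zero_iff] at h1
      simp only [mem_ball_zero_iff, not_lt] at h2
      apply ENNReal.ofReal_le_ofReal
      rcases le_or_gt 0 (t - n) with hs | hs
      · calc ‖h‖ ^ (t - n) ≤ (R j) ^ (t - n) :=
              Real.rpow_le_rpow (norm_nonneg _) h1.le hs
          _ ≤ 2^n * (R j) ^ (t - n) := by
              nlinarith [Real.rpow_nonneg (hRpos j).le (t - n),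
                one_le_pow₀ (one_le_two (α := ℝ)) (n := n)]
      · have hb1 : ‖h‖ ^ (t - n) ≤ (R (j+1)) ^ (t - n) :=
          Real.rpow_le_rpow_of_nonpos (hRpos (j+1)) h2 hs.le
        have e1 : R (j + 1) = R j * 2⁻¹ := by
          simp only [hR, pow_succ]; ring
        have e2 : (R j * 2⁻¹) ^ (t - n) = (R j) ^ (t - n) * ((2:ℝ)⁻¹) ^ (t - n) :=
          Real.mul_rpow (hRpos j).le (by norm_num)
        have e3 : ((2:ℝ)⁻¹) ^ (t - n) ≤ 2 ^ n := by
          rw [Real.inv_rpow (by norm_num : (0:ℝ) ≤ 2), ← Real.rpow_neg (by norm_num : (0:ℝ) ≤ 2)]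
          calc (2:ℝ) ^ (-(t - n)) ≤ 2 ^ (n:ℝ) :=
                Real.rpow_le_rpow_of_exponent_le one_le_two (by linarith)
            _ = 2 ^ n := by rw [Real.rpow_natCast]
        calc ‖h‖ ^ (t - n) ≤ (R j) ^ (t - n) * ((2:ℝ)⁻¹) ^ (t - n) := by
              rw [← e2, ← e1]; exact hb1
          _ ≤ (R j) ^ (t - n) * 2 ^ n := by
              apply mul_le_mul_of_nonneg_left e3 (Real.rpow_nonneg (hRpos j).le _)
          _ = 2 ^ n * (R j) ^ (t - n) := mul_comm _ _
    have hAm : MeasurableSet (A j) := measurableSet_ball.diff measurableSet_ball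
    calc (∫⁻ h in A j, F h) ≤ ∫⁻ _ in A j, ENNReal.ofReal ((2:ℝ)^n * (R j)^(t - n)) :=
          setLIntegral_mono' hAm hb
      _ = ENNReal.ofReal ((2:ℝ)^n * (R j)^(t - n)) * volume (A j) := setLIntegral_const _ _
      _ ≤ ENNReal.ofReal ((2:ℝ)^n * (R j)^(t - n)) * volume (ball (0:E) (R j)) := by
          exact mul_le_mul_right (measure_mono Set.diff_subset) _
      _ = ENNReal.ofReal ((2:ℝ)^n * (R j)^(t - n)) *
            (ENNReal.ofReal ((R j) ^ n) * volume (ball (0:E) 1)) := by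
          rw [Measure.addHaar_ball _ _ (hRpos j).le, finrank_euclideanSpace_fin]
      _ = ENNReal.ofReal ((2:ℝ)^n * d ^ t * ((2⁻¹:ℝ)^t)^j) * volume (ball (0:E) 1) := by
          rw [← mul_assoc, ← ENNReal.ofReal_mul (by positivity)]
          congr 2
          have : ((R j : ℝ)) ^ (n : ℕ) = (R j) ^ ((n:ℕ) : ℝ) := (Real.rpow_natCast _ _).symm
          rw [mul_assoc, this, ← Real.rpow_add (hRpos j), sub_add_cancel]
          have e4 : (R j) ^ t = d ^ t * (((2:ℝ)⁻¹)^t)^j := by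
            rw [hR]
            simp only
            rw [Real.mul_rpow hd.le (by positivity), ← Real.rpow_natCast ((2:ℝ)⁻¹) j,
              ← Real.rpow_mul (by norm_num : (0:ℝ) ≤ 2⁻¹), mul_comm (j:ℝ) t,
              Real.rpow_mul (by norm_num : (0:ℝ) ≤ 2⁻¹), Real.rpow_natCast]
          rw [e4, mul_assoc]
  set q : ℝ := ((2:ℝ)⁻¹) ^ t with hq
  have hq0 : 0 ≤ q := Real.rpow_nonneg (by norm_num) t
  have hq1 : q < 1 := Real.rpow_lt_one (by norm_num) (by norm_num) ht
  have h1q : 0 < 1 - q := by linarith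
  have hC0 : (0:ℝ) ≤ (2:ℝ)^n * d ^ t := by positivity
  calc (∫⁻ h in ball (0:E) d, F h) = ∫⁻ h in ball (0:E) d \ {0}, F h := step0
    _ ≤ ∫⁻ h in ⋃ j, A j, F h := lintegral_mono_set hsub
    _ ≤ ∑' j, ∫⁻ h in A j, F h := lintegral_iUnion_le _ _
    _ ≤ ∑' j, ENNReal.ofReal ((2:ℝ)^n * d ^ t * q^j) * volume (ball (0:E) 1) :=
        ENNReal.tsum_le_tsum step2
    _ = ∑' j, ENNReal.ofReal ((2:ℝ)^n * d ^ t) * (ENNReal.ofReal q)^j *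
          volume (ball (0:E) 1) := by
        congr 1; funext j
        rw [ENNReal.ofReal_mul hC0, ENNReal.ofReal_pow hq0]
    _ = ENNReal.ofReal ((2:ℝ)^n * d ^ t) * (∑' j, (ENNReal.ofReal q)^j) *
          volume (ball (0:E) 1) := by
        rw [ENNReal.tsum_mul_right, ENNReal.tsum_mul_left]
    _ = ENNReal.ofReal ((2:ℝ)^n * d ^ t) * (1 - ENNReal.ofReal q)⁻¹ *
          volume (ball (0:E) 1) := by rw [ENNReal.tsum_geometric]
    _ ≤ ENNReal.ofReal ((2:ℝ)^n * d ^ t) *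
          ENNReal.ofReal (((1 + p * Real.log 2) / Real.log 2) / t) *
          volume (ball (0:E) 1) := by
        apply mul_le_mul_left
        apply mul_le_mul_right
        have e5 : (1:ℝ≥0∞) - ENNReal.ofReal q = ENNReal.ofReal (1 - q) := by
          rw [ENNReal.ofReal_sub _ hq0, ENNReal.ofReal_one]
        rw [e5, ← ENNReal.ofReal_inv_of_pos h1q]
        exact ENNReal.ofReal_le_ofReal (geom_inv_bound hp ht htp)
    _ = ENNReal.ofReal ((2:ℝ)^n * d ^ t * (((1 + p * Real.log 2) / Real.log 2) / t)) *
          volume (ball (0:E) 1) := by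
        rw [ENNReal.ofReal_mul hC0]

lemma real_rpow_add_le {x y q : ℝ} (hx : 0 ≤ x) (hy : 0 ≤ y) (hq : 0 ≤ q) (hq1 : q ≤ 1) :
    (x + y) ^ q ≤ x ^ q + y ^ q := by
  have h := NNReal.rpow_add_le_add_rpow x.toNNReal y.toNNReal hq hq1
  have h2 := NNReal.coe_le_coe.2 h
  simpa [NNReal.coe_rpow, Real.coe_toNNReal x hx, Real.coe_toNNReal y hy,
    Real.toNNReal_add hx hy] using h2

lemma rsum_bound {p : ℝ} (hp : 0 ≤ p) {k : ℕ} (a b : EuclideanSpace ℝ (Fin k)) :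
    ‖a - b‖ ^ p ≤ 2 ^ p * (‖a‖ ^ p + ‖b‖ ^ p) := by
  have h1 : ‖a - b‖ ≤ ‖a‖ + ‖b‖ := norm_sub_le a b
  have h2 : ‖a - b‖ ^ p ≤ (‖a‖ + ‖b‖) ^ p := Real.rpow_le_rpow (norm_nonneg _) h1 hp
  have h3 : (‖a‖ + ‖b‖ : ℝ) ≤ 2 * max ‖a‖ ‖b‖ := by
    rcases le_total ‖a‖ ‖b‖ with h | h
    · simp [max_eq_right h]; linarith
    · simp [max_eq_left h]; linarith
  have h4 : (‖a‖ + ‖b‖ : ℝ) ^ p ≤ (2 * max ‖a‖ ‖b‖) ^ p :=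
    Real.rpow_le_rpow (by positivity) h3 hp
  have h5 : (2 * max ‖a‖ ‖b‖ : ℝ) ^ p = 2 ^ p * (max ‖a‖ ‖b‖) ^ p :=
    Real.mul_rpow (by norm_num) (le_max_of_le_left (norm_nonneg _))
  have h6 : (max ‖a‖ ‖b‖ : ℝ) ^ p ≤ ‖a‖ ^ p + ‖b‖ ^ p := by
    rcases le_total ‖a‖ ‖b‖ with h | h
    · rw [max_eq_right h]
      nlinarith [Real.rpow_nonneg (norm_nonneg a) p]
    · rw [max_eq_left h]
      nlinarith [Real.rpow_nonneg (norm_nonneg b) p]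
  have h7 : (0:ℝ) ≤ 2 ^ p := Real.rpow_nonneg (by norm_num) p
  nlinarith [Real.rpow_nonneg (add_nonneg (norm_nonneg a) (norm_nonneg b)) p]

end aux

set_option maxHeartbeats 2000000 in
/-- Lemma 2.6: a uniform finite-difference estimate implies a fractional Sobolev bound,
with `c = c(n,p)`. -/
theorem stmt3 (n k : ℕ) (hn : 2 ≤ n) (hk : 1 ≤ k) (p : ℝ) (hp : 1 < p) :
    ∃ c : ℝ, 0 < c ∧
      ∀ (x₀ : EuclideanSpace ℝ (Fin n)) (r : ℝ), 0 < r → r ≤ 1 →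
      ∀ f : EuclideanSpace ℝ (Fin n) → EuclideanSpace ℝ (Fin k), Measurable f →
        IntegrableOn (fun x => ‖f x‖ ^ p) (ball x₀ r) →
      ∀ α S K ρ : ℝ, α ∈ Set.Ioc (0 : ℝ) 1 → 1 ≤ S → 1 ≤ K → 0 < ρ → ρ < r →
        (∀ h : EuclideanSpace ℝ (Fin n), 0 < ‖h‖ → ‖h‖ ≤ (r - ρ) / K →
          (∫ x in ball x₀ ρ, ‖f (x + h) - f x‖ ^ p) ^ (1 / p) ≤ S * ‖h‖ ^ α) →
      ∀ β : ℝ, β ∈ Set.Ioo 0 α →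
        lpNormOn p (ball x₀ ρ) f + gagliardo β p (ball x₀ ρ) f ≤
          c / (α - β) ^ (1 / p) * ((r - ρ) / K) ^ (α - β) * S +
            c * (K / (r - ρ)) ^ ((n : ℝ) / p + β) * lpNormOn p (ball x₀ r) f := by
  haveI : Nonempty (Fin n) := ⟨⟨0, by omega⟩⟩
  have hp0 : (0:ℝ) < p := lt_trans one_pos hp
  have hpne : p ≠ 0 := hp0.ne'
  have hlog : 0 < Real.log 2 := Real.log_pos one_lt_two
  set Cp : ℝ := (1 + p * Real.log 2) / Real.log 2 with hCp
  have hCp0 : 0 < Cp := div_pos (by positivity) hlog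
  set v1 : ℝ := (volume (ball (0 : EuclideanSpace ℝ (Fin n)) 1)).toReal with hv1
  set v2 : ℝ := (volume (ball (0 : EuclideanSpace ℝ (Fin n)) 2)).toReal with hv2
  have hv10 : 0 ≤ v1 := ENNReal.toReal_nonneg
  have hv20 : 0 ≤ v2 := ENNReal.toReal_nonneg
  set c1 : ℝ := ((2:ℝ)^n * v1 * Cp) ^ (1/p) with hc1
  set c2 : ℝ := ((2:ℝ)^(p+1) * v2) ^ (1/p) with hc2
  have hc1b : (0:ℝ) ≤ (2:ℝ)^n * v1 * Cp := by positivity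
  have hc2b : (0:ℝ) ≤ (2:ℝ)^(p+1) * v2 := by positivity
  have hc10 : 0 ≤ c1 := Real.rpow_nonneg hc1b _
  have hc20 : 0 ≤ c2 := Real.rpow_nonneg hc2b _
  refine ⟨1 + c1 + c2, by linarith, ?_⟩
  intro x₀ r hr hr1 f hf hfi α S K ρ hα hS hK hρ hρr hyp β hβ
  obtain ⟨hα0, hα1⟩ := hα
  obtain ⟨hβ0, hβα⟩ := hβ
  have hS0 : (0:ℝ) ≤ S := by linarith
  have hK0 : (0:ℝ) < K := by linarith
  have hrρ : (0:ℝ) < r - ρ := by linarith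
  set d : ℝ := (r - ρ) / K with hd_def
  have hd : 0 < d := div_pos hrρ hK0
  have hdr : d ≤ r - ρ := div_le_self hrρ.le hK
  have hd1 : d ≤ 1 := by linarith
  set s : ℝ := (n:ℝ) + β * p with hs_def
  set t : ℝ := (α - β) * p with ht_def
  have hαβ : 0 < α - β := by linarith
  have ht : 0 < t := mul_pos hαβ hp0
  have htp : t ≤ p := by nlinarith
  have hn0 : (0:ℝ) < (n:ℝ) := by exact_mod_cast (by omega : 0 < n)
  have hs0 : 0 < s := by nlinarith
  set U : Set (EuclideanSpace ℝ (Fin n)) := ball x₀ ρ with hU_def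
  set V : Set (EuclideanSpace ℝ (Fin n)) := ball x₀ r with hV_def
  have hUmeas : MeasurableSet U := measurableSet_ball
  have hVmeas : MeasurableSet V := measurableSet_ball
  have hUV : U ⊆ V := ball_subset_ball hρr.le
  set ℓ : ℝ := ∫ x in V, ‖f x‖ ^ p with hℓ_def
  have hℓ0 : 0 ≤ ℓ :=
    integral_nonneg fun x => Real.rpow_nonneg (norm_nonneg _) _
  set L : ℝ≥0∞ := ∫⁻ x in V, ENNReal.ofReal (‖f x‖ ^ p) with hL_def
  have hLeq : L = ENNReal.ofReal ℓ := by
    rw [hL_def, hℓ_def]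
    exact (ofReal_integral_eq_lintegral_ofReal hfi
      (ae_of_all _ fun x => Real.rpow_nonneg (norm_nonneg _) _)).symm
  have hLfin : L ≠ ⊤ := by rw [hLeq]; exact ENNReal.ofReal_ne_top
  have hmnorm : Measurable fun x : EuclideanSpace ℝ (Fin n) =>
      ENNReal.ofReal (‖f x‖ ^ p) := by fun_prop
  -- geometry
  have haddV : ∀ x h : EuclideanSpace ℝ (Fin n), x ∈ U → ‖h‖ ≤ d → x + h ∈ V := by
    intro x h hx hh
    rw [hU_def, mem_ball] at hx
    rw [hV_def, mem_ball]
    have h1 : dist (x + h) x₀ ≤ dist (x + h) x + dist x x₀ := dist_triangle _ _ _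
    have h2 : dist (x + h) x = ‖h‖ := by
      rw [dist_comm, dist_self_add_right]
    linarith
  -- translation bounds
  have htransV : ∀ h : EuclideanSpace ℝ (Fin n),
      (∫⁻ x, V.indicator (fun y => ENNReal.ofReal (‖f y‖ ^ p)) (x + h)) = L := by
    intro h
    rw [lintegral_add_right_eq_self (V.indicator fun y => ENNReal.ofReal (‖f y‖ ^ p)) h,
      lintegral_indicator hVmeas]
  have htransU : ∀ h : EuclideanSpace ℝ (Fin n),
      (∫⁻ x, U.indicator (fun y => ENNReal.ofReal (‖f y‖ ^ p)) (x + h)) ≤ L := by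
    intro h
    rw [lintegral_add_right_eq_self (U.indicator fun y => ENNReal.ofReal (‖f y‖ ^ p)) h,
      lintegral_indicator hUmeas]
    exact lintegral_mono_set hUV
  -- finiteness of difference integrals
  have hPfin : ∀ h : EuclideanSpace ℝ (Fin n), ‖h‖ ≤ d →
      (∫⁻ x in U, ENNReal.ofReal (‖f (x + h) - f x‖ ^ p)) ≤
        ENNReal.ofReal (2 ^ p) * (L + L) := by
    intro h hh
    have hmeas1 : Measurable fun x : EuclideanSpace ℝ (Fin n) =>
        ENNReal.ofReal (‖f (x + h)‖ ^ p) := by fun_prop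
    calc (∫⁻ x in U, ENNReal.ofReal (‖f (x + h) - f x‖ ^ p))
        ≤ ∫⁻ x in U, ENNReal.ofReal (2 ^ p) *
            (ENNReal.ofReal (‖f (x + h)‖ ^ p) + ENNReal.ofReal (‖f x‖ ^ p)) := by
          refine lintegral_mono fun x => ?_
          calc ENNReal.ofReal (‖f (x + h) - f x‖ ^ p)
              ≤ ENNReal.ofReal (2 ^ p * (‖f (x + h)‖ ^ p + ‖f x‖ ^ p)) :=
                ENNReal.ofReal_le_ofReal (rsum_bound hp0.le _ _)
            _ = ENNReal.ofReal (2 ^ p) * (ENNReal.ofReal (‖f (x + h)‖ ^ p) +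
                  ENNReal.ofReal (‖f x‖ ^ p)) := by
                rw [ENNReal.ofReal_mul (Real.rpow_nonneg (by norm_num) _),
                  ENNReal.ofReal_add (Real.rpow_nonneg (norm_nonneg _) _)
                    (Real.rpow_nonneg (norm_nonneg _) _)]
      _ = ENNReal.ofReal (2 ^ p) * ((∫⁻ x in U, ENNReal.ofReal (‖f (x + h)‖ ^ p)) +
            ∫⁻ x in U, ENNReal.ofReal (‖f x‖ ^ p)) := by
          rw [lintegral_const_mul' _ _ ENNReal.ofReal_ne_top, lintegral_add_left hmeas1]
      _ ≤ ENNReal.ofReal (2 ^ p) * (L + L) := by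
          apply mul_le_mul_right
          apply add_le_add
          · rw [← lintegral_indicator hUmeas]
            calc (∫⁻ x, U.indicator (fun x => ENNReal.ofReal (‖f (x + h)‖ ^ p)) x)
                ≤ ∫⁻ x, V.indicator (fun y => ENNReal.ofReal (‖f y‖ ^ p)) (x + h) := by
                  refine lintegral_mono fun x => ?_
                  show U.indicator (fun x => ENNReal.ofReal (‖f (x + h)‖ ^ p)) x ≤
                    V.indicator (fun y => ENNReal.ofReal (‖f y‖ ^ p)) (x + h)
                  by_cases hx : x ∈ U
                  · rw [Set.indicator_of_mem hx, Set.indicator_of_mem (haddV x h hx hh)]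
                  · rw [Set.indicator_of_notMem hx]; exact zero_le
              _ = L := htransV h
          · exact lintegral_mono_set hUV
  have hP : ∀ h : EuclideanSpace ℝ (Fin n), 0 < ‖h‖ → ‖h‖ ≤ d →
      (∫⁻ x in U, ENNReal.ofReal (‖f (x + h) - f x‖ ^ p)) ≤
        ENNReal.ofReal ((S * ‖h‖ ^ α) ^ p) := by
    intro h hh0 hhd
    have hfin : (∫⁻ x in U, ENNReal.ofReal (‖f (x + h) - f x‖ ^ p)) ≠ ⊤ := by
      apply ne_top_of_le_ne_top _ (hPfin h hhd)
      exact ENNReal.mul_ne_top ENNReal.ofReal_ne_top (ENNReal.add_ne_top.mpr ⟨hLfin, hLfin⟩)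
    have hmq : Measurable fun x : EuclideanSpace ℝ (Fin n) =>
        ‖f (x + h) - f x‖ ^ p := by fun_prop
    have hint : (∫ x in U, ‖f (x + h) - f x‖ ^ p) =
        (∫⁻ x in U, ENNReal.ofReal (‖f (x + h) - f x‖ ^ p)).toReal :=
      integral_eq_lintegral_of_nonneg_ae
        (ae_of_all _ fun x => Real.rpow_nonneg (norm_nonneg _) _)
        hmq.aestronglyMeasurable
    have hb := hyp h hh0 hhd
    have h1 : 0 ≤ ∫ x in U, ‖f (x + h) - f x‖ ^ p :=
      integral_nonneg fun x => Real.rpow_nonneg (norm_nonneg _) _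
    have h2 : (∫ x in U, ‖f (x + h) - f x‖ ^ p) ≤ (S * ‖h‖ ^ α) ^ p := by
      have h3 := Real.rpow_le_rpow (Real.rpow_nonneg h1 _) hb hp0.le
      rwa [← Real.rpow_mul h1, one_div_mul_cancel hpne, Real.rpow_one] at h3
    calc (∫⁻ x in U, ENNReal.ofReal (‖f (x + h) - f x‖ ^ p))
        = ENNReal.ofReal ((∫⁻ x in U, ENNReal.ofReal (‖f (x + h) - f x‖ ^ p)).toReal) :=
          (ENNReal.ofReal_toReal hfin).symm
      _ = ENNReal.ofReal (∫ x in U, ‖f (x + h) - f x‖ ^ p) := by rw [hint]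
      _ ≤ ENNReal.ofReal ((S * ‖h‖ ^ α) ^ p) := ENNReal.ofReal_le_ofReal h2
  -- the double-integral setup
  set Φ : EuclideanSpace ℝ (Fin n) → EuclideanSpace ℝ (Fin n) → ℝ≥0∞ := fun x h =>
    U.indicator (fun _ => (1:ℝ≥0∞)) x * U.indicator (fun _ => (1:ℝ≥0∞)) (x + h) *
      ENNReal.ofReal (‖f x - f (x + h)‖ ^ p / dist x (x + h) ^ s) with hΦ_def
  have hΦmeas : Measurable (fun z : (EuclideanSpace ℝ (Fin n)) × (EuclideanSpace ℝ (Fin n)) =>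
      Φ z.1 z.2) := by
    have hadd : Measurable fun z : (EuclideanSpace ℝ (Fin n)) × (EuclideanSpace ℝ (Fin n)) =>
        z.1 + z.2 := measurable_fst.add measurable_snd
    have h1 : Measurable fun z : (EuclideanSpace ℝ (Fin n)) × (EuclideanSpace ℝ (Fin n)) =>
        U.indicator (fun _ => (1:ℝ≥0∞)) z.1 :=
      (measurable_const.indicator hUmeas).comp measurable_fst
    have h2 : Measurable fun z : (EuclideanSpace ℝ (Fin n)) × (EuclideanSpace ℝ (Fin n)) =>
        U.indicator (fun _ => (1:ℝ≥0∞)) (z.1 + z.2) :=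
      (measurable_const.indicator hUmeas).comp hadd
    have h3 : Measurable fun z : (EuclideanSpace ℝ (Fin n)) × (EuclideanSpace ℝ (Fin n)) =>
        ENNReal.ofReal (‖f z.1 - f (z.1 + z.2)‖ ^ p / dist z.1 (z.1 + z.2) ^ s) := by fun_prop
    exact (h1.mul h2).mul h3
  have hswap : (∫⁻ x in U, ∫⁻ y in U, ENNReal.ofReal (‖f x - f y‖ ^ p / dist x y ^ s))
      = ∫⁻ h, ∫⁻ x, Φ x h := by
    have hinner : ∀ x : EuclideanSpace ℝ (Fin n),
        (∫⁻ y in U, ENNReal.ofReal (‖f x - f y‖ ^ p / dist x y ^ s)) =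
          ∫⁻ h, U.indicator (fun _ => (1:ℝ≥0∞)) (x + h) *
            ENNReal.ofReal (‖f x - f (x + h)‖ ^ p / dist x (x + h) ^ s) := by
      intro x
      rw [← lintegral_indicator hUmeas]
      rw [← lintegral_add_left_eq_self
        (fun y => U.indicator (fun y => ENNReal.ofReal (‖f x - f y‖ ^ p / dist x y ^ s)) y) x]
      apply lintegral_congr
      intro h
      by_cases hy : x + h ∈ U
      · rw [Set.indicator_of_mem hy, Set.indicator_of_mem hy, one_mul]
      · rw [Set.indicator_of_notMem hy, Set.indicator_of_notMem hy, zero_mul]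
    calc (∫⁻ x in U, ∫⁻ y in U, ENNReal.ofReal (‖f x - f y‖ ^ p / dist x y ^ s))
        = ∫⁻ x, ∫⁻ h, Φ x h := by
          rw [← lintegral_indicator hUmeas]
          apply lintegral_congr
          intro x
          by_cases hx : x ∈ U
          · rw [Set.indicator_of_mem hx, hinner x]
            apply lintegral_congr
            intro h
            rw [hΦ_def]
            simp only [Set.indicator_of_mem hx, one_mul]
          · rw [Set.indicator_of_notMem hx]
            symm
            simp only [hΦ_def, Set.indicator_of_notMem hx, zero_mul]
            exact lintegral_zero
      _ = ∫⁻ h, ∫⁻ x, Φ x h := lintegral_lintegral_swap hΦmeas.aemeasurable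
  -- pointwise-in-h analysis
  set N : EuclideanSpace ℝ (Fin n) → ℝ≥0∞ := fun h =>
    ∫⁻ x, U.indicator (fun _ => (1:ℝ≥0∞)) x * U.indicator (fun _ => (1:ℝ≥0∞)) (x + h) *
      ENNReal.ofReal (‖f x - f (x + h)‖ ^ p) with hN_def
  have hΨN : ∀ h : EuclideanSpace ℝ (Fin n), h ≠ 0 →
      (∫⁻ x, Φ x h) = N h * (ENNReal.ofReal (‖h‖ ^ s))⁻¹ := by
    intro h hh
    have hn0' : 0 < ‖h‖ := norm_pos_iff.mpr hh
    have hpow : 0 < ‖h‖ ^ s := Real.rpow_pos_of_pos hn0' s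
    have hptw : ∀ x : EuclideanSpace ℝ (Fin n), Φ x h =
        U.indicator (fun _ => (1:ℝ≥0∞)) x * U.indicator (fun _ => (1:ℝ≥0∞)) (x + h) *
          ENNReal.ofReal (‖f x - f (x + h)‖ ^ p) * (ENNReal.ofReal (‖h‖ ^ s))⁻¹ := by
      intro x
      rw [hΦ_def]
      simp only [dist_self_add_right]
      rw [ENNReal.ofReal_div_of_pos hpow, div_eq_mul_inv, mul_assoc, mul_assoc, mul_assoc]
    rw [lintegral_congr hptw, lintegral_mul_const' _ _
      (ENNReal.inv_ne_top.mpr (ENNReal.ofReal_pos.mpr hpow).ne'), hN_def]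
  have hN1 : ∀ h : EuclideanSpace ℝ (Fin n), 0 < ‖h‖ → ‖h‖ ≤ d →
      N h ≤ ENNReal.ofReal ((S * ‖h‖ ^ α) ^ p) := by
    intro h hh0 hhd
    have step : N h ≤ ∫⁻ x in U, ENNReal.ofReal (‖f x - f (x + h)‖ ^ p) := by
      rw [hN_def, ← lintegral_indicator hUmeas]
      refine lintegral_mono fun x => ?_
      show U.indicator (fun _ => (1:ℝ≥0∞)) x * U.indicator (fun _ => (1:ℝ≥0∞)) (x + h) *
          ENNReal.ofReal (‖f x - f (x + h)‖ ^ p) ≤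
        U.indicator (fun x => ENNReal.ofReal (‖f x - f (x + h)‖ ^ p)) x
      by_cases hx : x ∈ U
      · rw [Set.indicator_of_mem hx, Set.indicator_of_mem hx, one_mul]
        by_cases hx2 : x + h ∈ U
        · rw [Set.indicator_of_mem hx2, one_mul]
        · rw [Set.indicator_of_notMem hx2, zero_mul]
          exact zero_le
      · rw [Set.indicator_of_notMem hx, Set.indicator_of_notMem hx, zero_mul, zero_mul]
    have hre : (∫⁻ x in U, ENNReal.ofReal (‖f x - f (x + h)‖ ^ p)) =
        ∫⁻ x in U, ENNReal.ofReal (‖f (x + h) - f x‖ ^ p) := by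
      apply lintegral_congr
      intro x
      rw [norm_sub_rev]
    calc N h ≤ ∫⁻ x in U, ENNReal.ofReal (‖f x - f (x + h)‖ ^ p) := step
      _ = ∫⁻ x in U, ENNReal.ofReal (‖f (x + h) - f x‖ ^ p) := hre
      _ ≤ ENNReal.ofReal ((S * ‖h‖ ^ α) ^ p) := hP h hh0 hhd
  have hN2 : ∀ h : EuclideanSpace ℝ (Fin n), N h ≤ ENNReal.ofReal (2 ^ p) * (L + L) := by
    intro h
    have hmeas1 : Measurable fun x : EuclideanSpace ℝ (Fin n) =>
        U.indicator (fun y => ENNReal.ofReal (‖f y‖ ^ p)) (x + h) :=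
      (hmnorm.indicator hUmeas).comp (measurable_add_const h)
    calc N h ≤ ∫⁻ x, ENNReal.ofReal (2 ^ p) *
          (U.indicator (fun y => ENNReal.ofReal (‖f y‖ ^ p)) (x + h) +
            U.indicator (fun y => ENNReal.ofReal (‖f y‖ ^ p)) x) := by
          rw [hN_def]
          refine lintegral_mono fun x => ?_
          show U.indicator (fun _ => (1:ℝ≥0∞)) x * U.indicator (fun _ => (1:ℝ≥0∞)) (x + h) *
              ENNReal.ofReal (‖f x - f (x + h)‖ ^ p) ≤ _
          by_cases hx : x ∈ U
          · by_cases hx2 : x + h ∈ U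
            · rw [Set.indicator_of_mem hx, Set.indicator_of_mem hx2, one_mul, one_mul,
                Set.indicator_of_mem hx, Set.indicator_of_mem hx2]
              have e1 : ENNReal.ofReal (‖f x - f (x + h)‖ ^ p) ≤
                  ENNReal.ofReal (2 ^ p * (‖f x‖ ^ p + ‖f (x + h)‖ ^ p)) :=
                ENNReal.ofReal_le_ofReal (rsum_bound hp0.le _ _)
              have e2 : ENNReal.ofReal (2 ^ p * (‖f x‖ ^ p + ‖f (x + h)‖ ^ p)) =
                  ENNReal.ofReal (2 ^ p) * (ENNReal.ofReal (‖f (x + h)‖ ^ p) +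
                    ENNReal.ofReal (‖f x‖ ^ p)) := by
                rw [ENNReal.ofReal_mul (Real.rpow_nonneg (by norm_num) _),
                  ENNReal.ofReal_add (Real.rpow_nonneg (norm_nonneg _) _)
                    (Real.rpow_nonneg (norm_nonneg _) _), add_comm (ENNReal.ofReal (‖f x‖ ^ p))]
              exact e2 ▸ e1
            · rw [Set.indicator_of_notMem hx2, mul_zero, zero_mul]
              exact zero_le
          · rw [Set.indicator_of_notMem hx, zero_mul, zero_mul]
            exact zero_le
      _ = ENNReal.ofReal (2 ^ p) *
          ((∫⁻ x, U.indicator (fun y => ENNReal.ofReal (‖f y‖ ^ p)) (x + h)) +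
            ∫⁻ x, U.indicator (fun y => ENNReal.ofReal (‖f y‖ ^ p)) x) := by
          rw [lintegral_const_mul' _ _ ENNReal.ofReal_ne_top, lintegral_add_left hmeas1]
      _ ≤ ENNReal.ofReal (2 ^ p) * (L + L) := by
          apply mul_le_mul_right
          apply add_le_add (htransU h)
          rw [lintegral_indicator hUmeas]
          exact lintegral_mono_set hUV
  have hΨ3 : ∀ h : EuclideanSpace ℝ (Fin n), 2 ≤ ‖h‖ → (∫⁻ x, Φ x h) = 0 := by
    intro h hh
    have hzero : ∀ x, Φ x h = 0 := by
      intro x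
      rw [hΦ_def]
      by_cases hx : x ∈ U
      · have hx2 : x + h ∉ U := by
          intro hmem
          rw [hU_def, mem_ball] at hx hmem
          have h1 : dist (x + h) x ≤ dist (x + h) x₀ + dist x₀ x := dist_triangle _ _ _
          have h2 : dist (x + h) x = ‖h‖ := by rw [dist_comm, dist_self_add_right]
          have h3 : dist x₀ x = dist x x₀ := dist_comm _ _
          linarith
        simp only [Set.indicator_of_notMem hx2, mul_zero, zero_mul]
      · simp only [Set.indicator_of_notMem hx, zero_mul]
    simp only [hzero, lintegral_zero]
  -- the majorant
  set W1 : EuclideanSpace ℝ (Fin n) → ℝ≥0∞ := fun h =>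
    (ball (0 : EuclideanSpace ℝ (Fin n)) d).indicator
      (fun h' => ENNReal.ofReal (S ^ p * ‖h'‖ ^ (t - n))) h with hW1_def
  set W2 : EuclideanSpace ℝ (Fin n) → ℝ≥0∞ := fun h =>
    ((ball (0 : EuclideanSpace ℝ (Fin n)) 2) \ (ball (0 : EuclideanSpace ℝ (Fin n)) d)).indicator
      (fun _ => ENNReal.ofReal (2 ^ (p+1) * d ^ (-s)) * L) h with hW2_def
  have hae : ∀ᵐ h : EuclideanSpace ℝ (Fin n), (∫⁻ x, Φ x h) ≤ W1 h + W2 h := by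
    have hne : ∀ᵐ h : EuclideanSpace ℝ (Fin n), h ≠ 0 := by
      have h0 : volume ({(0 : EuclideanSpace ℝ (Fin n))} : Set _) = 0 := measure_singleton _
      rw [ae_iff]
      simpa using h0
    filter_upwards [hne] with h hh
    have hh0 : 0 < ‖h‖ := norm_pos_iff.mpr hh
    rcases lt_or_ge ‖h‖ d with hcase | hcase
    · have hmem : h ∈ ball (0 : EuclideanSpace ℝ (Fin n)) d := mem_ball_zero_iff.mpr hcase
      have hpow : 0 < ‖h‖ ^ s := Real.rpow_pos_of_pos hh0 s
      have hb : (∫⁻ x, Φ x h) ≤ ENNReal.ofReal (S ^ p * ‖h‖ ^ (t - n)) := by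
        rw [hΨN h hh]
        calc N h * (ENNReal.ofReal (‖h‖ ^ s))⁻¹
            ≤ ENNReal.ofReal ((S * ‖h‖ ^ α) ^ p) * (ENNReal.ofReal (‖h‖ ^ s))⁻¹ :=
              mul_le_mul_left (hN1 h hh0 hcase.le) _
          _ = ENNReal.ofReal ((S * ‖h‖ ^ α) ^ p / ‖h‖ ^ s) := by
              rw [ENNReal.ofReal_div_of_pos hpow, div_eq_mul_inv]
          _ = ENNReal.ofReal (S ^ p * ‖h‖ ^ (t - n)) := by
              congr 1
              rw [Real.mul_rpow hS0 (Real.rpow_nonneg (norm_nonneg _) _),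
                ← Real.rpow_mul (norm_nonneg h), mul_div_assoc, ← Real.rpow_sub hh0]
              congr 1
              rw [hs_def, ht_def]
              ring
      calc (∫⁻ x, Φ x h) ≤ ENNReal.ofReal (S ^ p * ‖h‖ ^ (t - n)) := hb
        _ = W1 h := by
            simp only [hW1_def]
            exact (Set.indicator_of_mem hmem
              (fun h' => ENNReal.ofReal (S ^ p * ‖h'‖ ^ (t - (n:ℝ))))).symm
        _ ≤ W1 h + W2 h := self_le_add_right _ _
    · rcases lt_or_ge ‖h‖ 2 with hcase2 | hcase2
      · have hmem : h ∈ (ball (0 : EuclideanSpace ℝ (Fin n)) 2) \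
            (ball (0 : EuclideanSpace ℝ (Fin n)) d) :=
          ⟨mem_ball_zero_iff.mpr hcase2,
            fun hc => absurd (mem_ball_zero_iff.mp hc) (not_lt.mpr hcase)⟩
        have hinv : (ENNReal.ofReal (‖h‖ ^ s))⁻¹ ≤ ENNReal.ofReal (d ^ (-s)) := by
          rw [Real.rpow_neg hd.le, ENNReal.ofReal_inv_of_pos (Real.rpow_pos_of_pos hd s)]
          exact ENNReal.inv_le_inv' (ENNReal.ofReal_le_ofReal
            (Real.rpow_le_rpow hd.le hcase hs0.le))
        have hb2 : (∫⁻ x, Φ x h) ≤ ENNReal.ofReal (2 ^ (p+1) * d ^ (-s)) * L := by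
          rw [hΨN h hh]
          have step := mul_le_mul' (hN2 h) hinv
          refine step.trans (le_of_eq ?_)
          have e1 : ENNReal.ofReal ((2:ℝ) ^ p) * 2 = ENNReal.ofReal ((2:ℝ) ^ (p+1)) := by
            rw [Real.rpow_add_one (by norm_num : (2:ℝ) ≠ 0) p,
              ENNReal.ofReal_mul (Real.rpow_nonneg (by norm_num) _)]
            norm_num
          calc ENNReal.ofReal (2 ^ p) * (L + L) * ENNReal.ofReal (d ^ (-s))
              = (ENNReal.ofReal ((2:ℝ) ^ p) * 2) * ENNReal.ofReal (d ^ (-s)) * L := by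
                rw [← two_mul]; ring
            _ = ENNReal.ofReal ((2:ℝ) ^ (p+1)) * ENNReal.ofReal (d ^ (-s)) * L := by rw [e1]
            _ = ENNReal.ofReal (2 ^ (p+1) * d ^ (-s)) * L := by
                rw [← ENNReal.ofReal_mul (Real.rpow_nonneg (by norm_num) _)]
        calc (∫⁻ x, Φ x h) ≤ ENNReal.ofReal (2 ^ (p+1) * d ^ (-s)) * L := hb2
          _ = W2 h := by
              simp only [hW2_def]
              exact (Set.indicator_of_mem hmem
                (fun _ => ENNReal.ofReal (2 ^ (p+1) * d ^ (-s)) * L)).symm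
          _ ≤ W1 h + W2 h := le_add_self
      · rw [hΨ3 h hcase2]
        exact zero_le
  have h2s0 : (0:ℝ) ≤ 2 ^ (p+1) * d ^ (-s) :=
    mul_nonneg (Real.rpow_nonneg (by norm_num) _) (Real.rpow_nonneg hd.le _)
  have hX0 : (0:ℝ) ≤ (2:ℝ)^n * d ^ t * (Cp / t) :=
    mul_nonneg (mul_nonneg (by positivity) (Real.rpow_nonneg hd.le t))
      (div_nonneg hCp0.le ht.le)
  have hWsum : (∫⁻ h, (W1 h + W2 h)) ≤
      ENNReal.ofReal (S ^ p * ((2:ℝ)^n * d ^ t * (Cp / t)) * v1) +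
        ENNReal.ofReal (2 ^ (p+1) * d ^ (-s) * ℓ * v2) := by
    have hW1m : Measurable W1 := by
      rw [hW1_def]
      exact Measurable.indicator (by fun_prop) measurableSet_ball
    rw [lintegral_add_left hW1m]
    apply add_le_add
    · rw [hW1_def]
      simp only
      rw [lintegral_indicator measurableSet_ball]
      calc (∫⁻ h in ball (0 : EuclideanSpace ℝ (Fin n)) d,
            ENNReal.ofReal (S ^ p * ‖h‖ ^ (t - n)))
          = ∫⁻ h in ball (0 : EuclideanSpace ℝ (Fin n)) d,
              ENNReal.ofReal (S ^ p) * ENNReal.ofReal (‖h‖ ^ (t - n)) :=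
            lintegral_congr fun h => ENNReal.ofReal_mul (Real.rpow_nonneg hS0 p)
        _ = ENNReal.ofReal (S ^ p) *
              ∫⁻ h in ball (0 : EuclideanSpace ℝ (Fin n)) d,
                ENNReal.ofReal (‖h‖ ^ (t - n)) :=
            lintegral_const_mul' _ _ ENNReal.ofReal_ne_top
        _ ≤ ENNReal.ofReal (S ^ p) * (ENNReal.ofReal ((2:ℝ)^n * d ^ t * (Cp / t)) *
              volume (ball (0 : EuclideanSpace ℝ (Fin n)) 1)) := by
            apply mul_le_mul_right
            have hrb := radial_bound n (by omega) hp ht htp hd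
            rw [hCp]
            exact hrb
        _ = ENNReal.ofReal (S ^ p * ((2:ℝ)^n * d ^ t * (Cp / t)) * v1) := by
            have hb1 : volume (ball (0 : EuclideanSpace ℝ (Fin n)) 1) = ENNReal.ofReal v1 := by
              rw [hv1, ENNReal.ofReal_toReal measure_ball_lt_top.ne]
            rw [hb1, ← ENNReal.ofReal_mul hX0,
              ← ENNReal.ofReal_mul (Real.rpow_nonneg hS0 p)]
            congr 1
            ring
    · rw [hW2_def]
      simp only
      rw [lintegral_indicator_const (measurableSet_ball.diff measurableSet_ball)]
      calc ENNReal.ofReal (2 ^ (p+1) * d ^ (-s)) * L *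
            volume ((ball (0 : EuclideanSpace ℝ (Fin n)) 2) \
              (ball (0 : EuclideanSpace ℝ (Fin n)) d))
          ≤ ENNReal.ofReal (2 ^ (p+1) * d ^ (-s)) * L *
              volume (ball (0 : EuclideanSpace ℝ (Fin n)) 2) :=
            mul_le_mul_right (measure_mono Set.diff_subset) _
        _ = ENNReal.ofReal (2 ^ (p+1) * d ^ (-s) * ℓ * v2) := by
            have hb2 : volume (ball (0 : EuclideanSpace ℝ (Fin n)) 2) = ENNReal.ofReal v2 := by
              rw [hv2, ENNReal.ofReal_toReal measure_ball_lt_top.ne]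
            rw [hLeq, hb2, ← ENNReal.ofReal_mul h2s0,
              ← ENNReal.ofReal_mul (mul_nonneg h2s0 hℓ0)]
  set A : ℝ := S ^ p * ((2:ℝ)^n * d ^ t * (Cp / t)) * v1 with hA_def
  set B : ℝ := 2 ^ (p+1) * d ^ (-s) * ℓ * v2 with hB_def
  have hA0 : 0 ≤ A := mul_nonneg (mul_nonneg (Real.rpow_nonneg hS0 p) hX0) hv10
  have hB0 : 0 ≤ B := mul_nonneg (mul_nonneg h2s0 hℓ0) hv20
  -- from the double integral to A + B
  have hI0 : 0 ≤ ∫ x in U, ∫ y in U, ‖f x - f y‖ ^ p / dist x y ^ s :=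
    integral_nonneg fun x => integral_nonneg fun y =>
      div_nonneg (Real.rpow_nonneg (norm_nonneg _) _) (Real.rpow_nonneg dist_nonneg _)
  have hIAB : (∫ x in U, ∫ y in U, ‖f x - f y‖ ^ p / dist x y ^ s) ≤ A + B := by
    have hGm : StronglyMeasurable
        (fun z : (EuclideanSpace ℝ (Fin n)) × (EuclideanSpace ℝ (Fin n)) =>
          ‖f z.1 - f z.2‖ ^ p / dist z.1 z.2 ^ s) :=
      (by fun_prop : Measurable _).stronglyMeasurable
    have hgmeas : AEStronglyMeasurable
        (fun x => ∫ y in U, ‖f x - f y‖ ^ p / dist x y ^ s) (volume.restrict U) :=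
      hGm.integral_prod_right'.aestronglyMeasurable
    have step1 : (∫ x in U, ∫ y in U, ‖f x - f y‖ ^ p / dist x y ^ s) =
        (∫⁻ x in U, ENNReal.ofReal (∫ y in U, ‖f x - f y‖ ^ p / dist x y ^ s)).toReal :=
      integral_eq_lintegral_of_nonneg_ae
        (ae_of_all _ fun x => integral_nonneg fun y =>
          div_nonneg (Real.rpow_nonneg (norm_nonneg _) _) (Real.rpow_nonneg dist_nonneg _))
        hgmeas
    have step2 : (∫⁻ x in U, ENNReal.ofReal (∫ y in U, ‖f x - f y‖ ^ p / dist x y ^ s)) ≤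
        ∫⁻ x in U, ∫⁻ y in U, ENNReal.ofReal (‖f x - f y‖ ^ p / dist x y ^ s) := by
      refine lintegral_mono fun x => ?_
      have hmx : Measurable fun y => ‖f x - f y‖ ^ p / dist x y ^ s := by fun_prop
      rw [integral_eq_lintegral_of_nonneg_ae
        (ae_of_all _ fun y =>
          div_nonneg (Real.rpow_nonneg (norm_nonneg _) _) (Real.rpow_nonneg dist_nonneg _))
        hmx.aestronglyMeasurable]
      exact ENNReal.ofReal_toReal_le
    have step3 : (∫⁻ x in U, ∫⁻ y in U, ENNReal.ofReal (‖f x - f y‖ ^ p / dist x y ^ s)) ≤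
        ENNReal.ofReal (A + B) := by
      rw [hswap]
      calc (∫⁻ h, ∫⁻ x, Φ x h) ≤ ∫⁻ h, (W1 h + W2 h) := lintegral_mono_ae hae
        _ ≤ ENNReal.ofReal A + ENNReal.ofReal B := hWsum
        _ = ENNReal.ofReal (A + B) := (ENNReal.ofReal_add hA0 hB0).symm
    rw [step1]
    exact ENNReal.toReal_le_of_le_ofReal (by linarith) (le_trans step2 step3)
  have hgag : gagliardo β p U f ≤ A ^ (1/p) + B ^ (1/p) := by
    have hgd : gagliardo β p U f =
        (∫ x in U, ∫ y in U, ‖f x - f y‖ ^ p / dist x y ^ s) ^ (1/p) := by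
      rw [gagliardo, ← hs_def]
    rw [hgd]
    calc (∫ x in U, ∫ y in U, ‖f x - f y‖ ^ p / dist x y ^ s) ^ (1/p)
        ≤ (A + B) ^ (1/p) := Real.rpow_le_rpow hI0 hIAB (by positivity)
      _ ≤ A ^ (1/p) + B ^ (1/p) :=
          real_rpow_add_le hA0 hB0 (by positivity) (by rw [div_le_one hp0]; linarith)
  -- Lp bounds
  have hlpV : lpNormOn p V f = ℓ ^ (1/p) := by rw [lpNormOn, ← hℓ_def]
  have hlpU : lpNormOn p U f ≤ ℓ ^ (1/p) := by
    rw [lpNormOn]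
    apply Real.rpow_le_rpow
      (integral_nonneg fun x => Real.rpow_nonneg (norm_nonneg _) _) ?_ (by positivity)
    rw [hℓ_def]
    exact setIntegral_mono_set hfi
      (ae_of_all _ fun x => Real.rpow_nonneg (norm_nonneg _) _)
      (HasSubset.Subset.eventuallyLE hUV)
  -- final numerics
  set e' : ℝ := (n:ℝ)/p + β with he'_def
  have he'0 : 0 < e' := add_pos (div_pos hn0 hp0) hβ0
  have hKd : K / (r - ρ) = d⁻¹ := by rw [hd_def, inv_div]
  have hde' : (K / (r - ρ)) ^ e' = d ^ (-e') := by
    rw [hKd, Real.inv_rpow hd.le, ← Real.rpow_neg hd.le]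
  have hone_le : (1:ℝ) ≤ d ^ (-e') :=
    Real.one_le_rpow_of_pos_of_le_one_of_nonpos hd hd1 (by linarith)
  have hZ10 : 0 ≤ c1 / (α - β) ^ (1/p) * d ^ (α - β) * S :=
    mul_nonneg (mul_nonneg (div_nonneg hc10 (Real.rpow_nonneg hαβ.le _))
      (Real.rpow_nonneg hd.le _)) hS0
  have hZ1 : A ^ (1/p) ≤ c1 / (α - β) ^ (1/p) * d ^ (α - β) * S := by
    have hexp : (c1 / (α - β) ^ (1/p) * d ^ (α - β) * S) ^ p =
        ((2:ℝ)^n * v1 * Cp) / (α - β) * d ^ t * S ^ p := by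
      rw [Real.mul_rpow (mul_nonneg (div_nonneg hc10 (Real.rpow_nonneg hαβ.le _))
          (Real.rpow_nonneg hd.le _)) hS0,
        Real.mul_rpow (div_nonneg hc10 (Real.rpow_nonneg hαβ.le _))
          (Real.rpow_nonneg hd.le _),
        Real.div_rpow hc10 (Real.rpow_nonneg hαβ.le _)]
      have e1 : c1 ^ p = (2:ℝ)^n * v1 * Cp := by
        rw [hc1, ← Real.rpow_mul hc1b, one_div_mul_cancel hpne, Real.rpow_one]
      have e2 : ((α - β) ^ (1/p)) ^ p = α - β := by
        rw [← Real.rpow_mul hαβ.le, one_div_mul_cancel hpne, Real.rpow_one]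
      have e3 : (d ^ (α - β)) ^ p = d ^ t := by
        rw [← Real.rpow_mul hd.le, ← ht_def]
      rw [e1, e2, e3]
    have hAle : A ≤ (c1 / (α - β) ^ (1/p) * d ^ (α - β) * S) ^ p := by
      rw [hexp]
      have h1 : Cp / t ≤ Cp / (α - β) := by
        apply div_le_div_of_nonneg_left hCp0.le hαβ
        rw [ht_def]
        exact le_mul_of_one_le_right hαβ.le hp.le
      have h2 : 0 ≤ S ^ p * (2:ℝ)^n * v1 * d ^ t :=
        mul_nonneg (mul_nonneg (mul_nonneg (Real.rpow_nonneg hS0 p) (by positivity)) hv10)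
          (Real.rpow_nonneg hd.le t)
      calc A = (S ^ p * (2:ℝ)^n * v1 * d ^ t) * (Cp / t) := by rw [hA_def]; ring
        _ ≤ (S ^ p * (2:ℝ)^n * v1 * d ^ t) * (Cp / (α - β)) :=
            mul_le_mul_of_nonneg_left h1 h2
        _ = ((2:ℝ)^n * v1 * Cp) / (α - β) * d ^ t * S ^ p := by ring
    calc A ^ (1/p) ≤ ((c1 / (α - β) ^ (1/p) * d ^ (α - β) * S) ^ p) ^ (1/p) :=
          Real.rpow_le_rpow hA0 hAle (by positivity)
      _ = c1 / (α - β) ^ (1/p) * d ^ (α - β) * S := by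
          rw [← Real.rpow_mul hZ10, mul_one_div_cancel hpne, Real.rpow_one]
  have hZ20 : 0 ≤ c2 * d ^ (-e') * ℓ ^ (1/p) :=
    mul_nonneg (mul_nonneg hc20 (Real.rpow_nonneg hd.le _)) (Real.rpow_nonneg hℓ0 _)
  have hZ2 : B ^ (1/p) ≤ c2 * d ^ (-e') * ℓ ^ (1/p) := by
    have hexp2 : (c2 * d ^ (-e') * ℓ ^ (1/p)) ^ p = (2:ℝ) ^ (p+1) * v2 * d ^ (-s) * ℓ := by
      rw [Real.mul_rpow (mul_nonneg hc20 (Real.rpow_nonneg hd.le _))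
          (Real.rpow_nonneg hℓ0 _),
        Real.mul_rpow hc20 (Real.rpow_nonneg hd.le _)]
      have e1 : c2 ^ p = (2:ℝ)^(p+1) * v2 := by
        rw [hc2, ← Real.rpow_mul hc2b, one_div_mul_cancel hpne, Real.rpow_one]
      have e2 : (d ^ (-e')) ^ p = d ^ (-s) := by
        rw [← Real.rpow_mul hd.le]
        congr 1
        rw [he'_def, hs_def]
        field_simp
      have e3 : (ℓ ^ (1/p)) ^ p = ℓ := by
        rw [← Real.rpow_mul hℓ0, one_div_mul_cancel hpne, Real.rpow_one]
      rw [e1, e2, e3]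
    have hBle : B ≤ (c2 * d ^ (-e') * ℓ ^ (1/p)) ^ p := by
      rw [hexp2, hB_def]
      apply le_of_eq
      ring
    calc B ^ (1/p) ≤ ((c2 * d ^ (-e') * ℓ ^ (1/p)) ^ p) ^ (1/p) :=
          Real.rpow_le_rpow hB0 hBle (by positivity)
      _ = c2 * d ^ (-e') * ℓ ^ (1/p) := by
          rw [← Real.rpow_mul hZ20, mul_one_div_cancel hpne, Real.rpow_one]
  rw [hde', hlpV]
  have k1 : 0 ≤ d ^ (α - β) := Real.rpow_nonneg hd.le _
  have k2 : 0 < (α - β) ^ (1/p) := Real.rpow_pos_of_pos hαβ _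
  have k3 : 0 ≤ ℓ ^ (1/p) := Real.rpow_nonneg hℓ0 _
  have k4 : 0 ≤ d ^ (-e') := Real.rpow_nonneg hd.le _
  have m1 : c1 / (α - β) ^ (1/p) * d ^ (α - β) * S ≤
      (1 + c1 + c2) / (α - β) ^ (1/p) * d ^ (α - β) * S := by
    apply mul_le_mul_of_nonneg_right _ hS0
    apply mul_le_mul_of_nonneg_right _ k1
    apply div_le_div_of_nonneg_right ?_ k2.le
    linarith
  have m2 : ℓ ^ (1/p) ≤ d ^ (-e') * ℓ ^ (1/p) := by
    calc ℓ ^ (1/p) = 1 * ℓ ^ (1/p) := (one_mul _).symm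
      _ ≤ d ^ (-e') * ℓ ^ (1/p) := mul_le_mul_of_nonneg_right hone_le k3
  have m3 : d ^ (-e') * ℓ ^ (1/p) + c2 * d ^ (-e') * ℓ ^ (1/p) ≤
      (1 + c1 + c2) * d ^ (-e') * ℓ ^ (1/p) := by
    calc d ^ (-e') * ℓ ^ (1/p) + c2 * d ^ (-e') * ℓ ^ (1/p)
        = (1 + c2) * (d ^ (-e') * ℓ ^ (1/p)) := by ring
      _ ≤ (1 + c1 + c2) * (d ^ (-e') * ℓ ^ (1/p)) :=
          mul_le_mul_of_nonneg_right (by linarith) (mul_nonneg k4 k3)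
      _ = (1 + c1 + c2) * d ^ (-e') * ℓ ^ (1/p) := by ring
  calc lpNormOn p U f + gagliardo β p U f
      ≤ ℓ ^ (1/p) + (A ^ (1/p) + B ^ (1/p)) := add_le_add hlpU hgag
    _ ≤ d ^ (-e') * ℓ ^ (1/p) +
        (c1 / (α - β) ^ (1/p) * d ^ (α - β) * S + c2 * d ^ (-e') * ℓ ^ (1/p)) :=
        add_le_add m2 (add_le_add hZ1 hZ2)
    _ ≤ (1 + c1 + c2) / (α - β) ^ (1/p) * d ^ (α - β) * S +
        (1 + c1 + c2) * d ^ (-e') * ℓ ^ (1/p) := by linarith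
end

section
/- Let n ≥ 1, q ≥ 1 and L > 0. There exists a constant c > 0, depending only on n, L and q, such that for every convex, differentiable function g : ℝⁿ → ℝ satisfying 0 ≤ g(z) ≤ L (1 + |z|²)^{q/2} for all z ∈ ℝⁿ, one has |∇g(z)| ≤ c (1 + |z|²)^{(q−1)/2} for all z ∈ ℝⁿ. -/
open Set

/-- Subgradient inequality for a convex differentiable function. -/
lemma subgrad_ineq {n : ℕ} {g : EuclideanSpace ℝ (Fin n) → ℝ}
    (hconv : ConvexOn ℝ Set.univ g) (hdiff : Differentiable ℝ g)
    (x v : EuclideanSpace ℝ (Fin n)) :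
    inner ℝ (gradient g x) v ≤ g (x + v) - g x := by
  set φ : ℝ → ℝ := fun t => g (x + t • v) with hφ
  have hφconv : ConvexOn ℝ Set.univ φ := by
    have := hconv.comp_affineMap (AffineMap.lineMap x (x + v))
    simp only [Set.preimage_univ] at this
    have heq : φ = g ∘ (AffineMap.lineMap x (x + v)) := by
      funext t
      simp [φ, Function.comp, AffineMap.lineMap_apply, add_comm]
    rw [heq]; exact this
  have hcurve : HasDerivAt (fun t : ℝ => x + t • v) v 0 := by
    have h1 : HasDerivAt (fun t : ℝ => t • v) ((1 : ℝ) • v) 0 :=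
      (hasDerivAt_id (0 : ℝ)).smul_const v
    simpa using h1.const_add x
  have hder : HasDerivAt φ (fderiv ℝ g x v) 0 := by
    have := ((hdiff (x + (0:ℝ) • v)).hasFDerivAt.comp_hasDerivAt 0 hcurve)
    simp only [zero_smul, add_zero] at this
    exact this
  have hslope : fderiv ℝ g x v ≤ slope φ 0 1 :=
    hφconv.le_slope_of_hasDerivWithinAt (mem_univ 0) (mem_univ 1) one_pos
      (hder.hasDerivWithinAt)
  have hgrad : (inner ℝ (gradient g x) v : ℝ) = fderiv ℝ g x v := by
    rw [gradient]
    rw [← InnerProductSpace.toDual_apply_apply]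
    simp
  have : slope φ 0 1 = g (x + v) - g x := by
    simp [slope_def_field, φ]
  rw [hgrad]
  rw [this] at hslope
  exact hslope

/-- Display (23): a convex differentiable function with `q`-growth, `0 ≤ g(z) ≤ L(1+|z|²)^{q/2}`,
has gradient bounded by `c (1+|z|²)^{(q−1)/2}` with `c = c(n,L,q)`. -/
theorem stmt11 (n : ℕ) (hn : 1 ≤ n) (q L : ℝ) (hq : 1 ≤ q) (hL : 0 < L) :
    ∃ c : ℝ, 0 < c ∧
      ∀ g : EuclideanSpace ℝ (Fin n) → ℝ,
        ConvexOn ℝ Set.univ g → Differentiable ℝ g →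
        (∀ z, 0 ≤ g z ∧ g z ≤ L * (1 + ‖z‖ ^ 2) ^ (q / 2)) →
        ∀ z, ‖gradient g z‖ ≤ c * (1 + ‖z‖ ^ 2) ^ ((q - 1) / 2) := by
  refine ⟨L * 2 ^ q, by positivity, fun g hconv hdiff hbound z => ?_⟩
  set G := gradient g z with hG
  have hpos : (0 : ℝ) < 1 + ‖z‖ ^ 2 := by positivity
  have hrpow_pos : (0 : ℝ) < (1 + ‖z‖ ^ 2) ^ ((q - 1) / 2) := Real.rpow_pos_of_pos hpos _
  rcases eq_or_ne G 0 with h0 | h0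
  · rw [h0, norm_zero]; positivity
  · set r : ℝ := Real.sqrt (1 + ‖z‖ ^ 2) with hr
    have hr_pos : 0 < r := Real.sqrt_pos.mpr hpos
    have hr_sq : r ^ 2 = 1 + ‖z‖ ^ 2 := Real.sq_sqrt hpos.le
    have hGnorm : 0 < ‖G‖ := norm_pos_iff.mpr h0
    set v : EuclideanSpace ℝ (Fin n) := (r / ‖G‖) • G with hv
    have hinner : (inner ℝ G v : ℝ) = r * ‖G‖ := by
      rw [hv, real_inner_smul_right, real_inner_self_eq_norm_sq]
      field_simp
    have hkey : r * ‖G‖ ≤ g (z + v) - g z := by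
      rw [← hinner]; exact subgrad_ineq hconv hdiff z v
    have hgz : 0 ≤ g z := (hbound z).1
    have hvnorm : ‖v‖ = r := by
      rw [hv, norm_smul]
      rw [Real.norm_eq_abs, abs_of_pos (by positivity)]
      field_simp
    have hynorm : ‖z + v‖ ^ 2 ≤ 3 + 4 * ‖z‖ ^ 2 := by
      have h1 : ‖z + v‖ ≤ ‖z‖ + r := by
        calc ‖z + v‖ ≤ ‖z‖ + ‖v‖ := norm_add_le _ _
        _ = ‖z‖ + r := by rw [hvnorm]
      have h2 : ‖z‖ ≤ r := by
        nlinarith [norm_nonneg z, hr_pos]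
      nlinarith [norm_nonneg (z + v), norm_nonneg z]
    have hub : g (z + v) ≤ L * (4 * (1 + ‖z‖ ^ 2)) ^ (q / 2) := by
      calc g (z + v) ≤ L * (1 + ‖z + v‖ ^ 2) ^ (q / 2) := (hbound (z + v)).2
      _ ≤ L * (4 * (1 + ‖z‖ ^ 2)) ^ (q / 2) := by
          apply mul_le_mul_of_nonneg_left _ hL.le
          apply Real.rpow_le_rpow (by positivity) _ (by linarith)
          nlinarith
    have hfour : (4 * (1 + ‖z‖ ^ 2)) ^ (q / 2) = 2 ^ q * (1 + ‖z‖ ^ 2) ^ (q / 2) := by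
      rw [Real.mul_rpow (by norm_num) hpos.le]
      congr 1
      rw [show (4 : ℝ) = 2 ^ (2 : ℝ) by norm_num, ← Real.rpow_mul (by norm_num)]
      congr 1
      ring
    have hchain : r * ‖G‖ ≤ L * 2 ^ q * (1 + ‖z‖ ^ 2) ^ (q / 2) := by
      calc r * ‖G‖ ≤ g (z + v) - g z := hkey
      _ ≤ g (z + v) := by linarith
      _ ≤ L * (4 * (1 + ‖z‖ ^ 2)) ^ (q / 2) := hub
      _ = L * 2 ^ q * (1 + ‖z‖ ^ 2) ^ (q / 2) := by rw [hfour]; ring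
    have hrrpow : r = (1 + ‖z‖ ^ 2) ^ ((1 : ℝ) / 2) := by
      rw [hr, Real.sqrt_eq_rpow]
    have hsplit : (1 + ‖z‖ ^ 2) ^ (q / 2) = r * (1 + ‖z‖ ^ 2) ^ ((q - 1) / 2) := by
      rw [hrrpow, ← Real.rpow_add hpos]
      congr 1
      ring
    rw [hsplit] at hchain
    have : r * ‖G‖ ≤ r * (L * 2 ^ q * (1 + ‖z‖ ^ 2) ^ ((q - 1) / 2)) := by
      calc r * ‖G‖ ≤ L * 2 ^ q * (r * (1 + ‖z‖ ^ 2) ^ ((q - 1) / 2)) := hchain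
      _ = r * (L * 2 ^ q * (1 + ‖z‖ ^ 2) ^ ((q - 1) / 2)) := by ring
    exact le_of_mul_le_mul_left this hr_pos
end

section
/- Let n ≥ 2, p > 1, ν > 0 and μ ∈ (0,1]. There exists a constant c > 0, depending only on n and p, with the following property: if g : ℝⁿ → ℝ is twice continuously differentiable and D²g(z) ξ · ξ ≥ ν (μ² + |z|²)^{(p−2)/2} |ξ|² for all z, ξ ∈ ℝⁿ, then (∇g(z₁) − ∇g(z₂)) · (z₁ − z₂) ≥ c ν |V_{μ,p}(z₁) − V_{μ,p}(z₂)|² for all z₁, z₂ ∈ ℝⁿ. -/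
open scoped RealInnerProductSpace

/-- The auxiliary vector field `V_{μ,p}(z) = (μ² + |z|²)^((p-2)/4) z`. -/
noncomputable def Vmap {n : ℕ} (μ t : ℝ) (z : EuclideanSpace ℝ (Fin n)) :
    EuclideanSpace ℝ (Fin n) :=
  (μ ^ 2 + ‖z‖ ^ 2) ^ ((t - 2) / 4) • z

lemma rpow_shift_mvt {μ q t₁ t₂ : ℝ} (hμ : 0 < μ) (h2 : 0 ≤ t₂) (h21 : t₂ ≤ t₁) :
    |(μ ^ 2 + t₁) ^ q - (μ ^ 2 + t₂) ^ q| ≤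
      |q| * max ((μ ^ 2 + t₂) ^ (q - 1)) ((μ ^ 2 + t₁) ^ (q - 1)) * (t₁ - t₂) := by
  have hb : 0 < μ ^ 2 + t₂ := by positivity
  have ha : 0 < μ ^ 2 + t₁ := by linarith
  rcases eq_or_lt_of_le h21 with rfl | hlt
  · simp
  · have hder : ∀ t ∈ Set.Ioo t₂ t₁,
        HasDerivAt (fun t => (μ ^ 2 + t) ^ q) (q * (μ ^ 2 + t) ^ (q - 1)) t := by
      intro t ht
      have h0 : (0:ℝ) < μ ^ 2 + t := by nlinarith [ht.1]
      have := ((hasDerivAt_id t).const_add (μ ^ 2)).rpow_const (p := q) (Or.inl h0.ne')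
      simpa using this
    have hcont : ContinuousOn (fun t => (μ ^ 2 + t) ^ q) (Set.Icc t₂ t₁) := by
      intro t ht
      have h0 : (0:ℝ) < μ ^ 2 + t := by nlinarith [ht.1]
      exact (((hasDerivAt_id t).const_add (μ ^ 2)).rpow_const
        (p := q) (Or.inl h0.ne')).differentiableAt.continuousAt.continuousWithinAt
    obtain ⟨ξ, hξ, hslope⟩ := exists_hasDerivAt_eq_slope (fun t => (μ ^ 2 + t) ^ q)
      (fun t => q * (μ ^ 2 + t) ^ (q - 1)) hlt hcont (fun t ht => hder t ht)
    have hξb : 0 < μ ^ 2 + ξ := by nlinarith [hξ.1]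
    have hmax : (μ ^ 2 + ξ) ^ (q - 1) ≤
        max ((μ ^ 2 + t₂) ^ (q - 1)) ((μ ^ 2 + t₁) ^ (q - 1)) := by
      rcases le_or_gt 0 (q - 1) with hq | hq
      · exact le_max_of_le_right (Real.rpow_le_rpow hξb.le (by linarith [hξ.2]) hq)
      · exact le_max_of_le_left (Real.rpow_le_rpow_of_nonpos hb (by linarith [hξ.1]) hq.le)
    have heq : (μ ^ 2 + t₁) ^ q - (μ ^ 2 + t₂) ^ q = q * (μ ^ 2 + ξ) ^ (q - 1) * (t₁ - t₂) := by
      rw [eq_div_iff (by intro h; apply hlt.ne'; linarith : t₁ - t₂ ≠ 0)] at hslope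
      linarith [hslope]
    rw [heq, abs_mul, abs_of_nonneg (by linarith : (0:ℝ) ≤ t₁ - t₂), abs_mul]
    have h1 : |(μ ^ 2 + ξ) ^ (q - 1)| = (μ ^ 2 + ξ) ^ (q - 1) :=
      abs_of_nonneg (Real.rpow_nonneg hξb.le _)
    rw [h1]
    have := mul_le_mul_of_nonneg_left hmax (abs_nonneg q)
    nlinarith [this, abs_nonneg q]

lemma le_rpow_half {x c : ℝ} (hx : 0 ≤ x) (h : x ^ 2 ≤ c) : x ≤ c ^ ((1:ℝ)/2) := by
  rw [← Real.sqrt_eq_rpow, ← Real.sqrt_sq hx]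
  exact Real.sqrt_le_sqrt h

lemma rpow_half_le {x c : ℝ} (hc : 0 ≤ c) (h : x ≤ c ^ 2) : x ^ ((1:ℝ)/2) ≤ c := by
  rw [← Real.sqrt_eq_rpow, ← Real.sqrt_sq hc]
  exact Real.sqrt_le_sqrt h

lemma mul3_mono {c x y w : ℝ} (hc : 0 ≤ c) (hw : 0 ≤ w) (hx : x ≤ y) :
    c * x * w ≤ c * y * w :=
  mul_le_mul_of_nonneg_right (mul_le_mul_of_nonneg_left hx hc) hw

/-- quarter-comparison for rpow with possibly negative exponent -/
lemma rpow_quarter {a b e k : ℝ} (ha : 0 < a) (hb : 0 < b) (hk : 1 ≤ k)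
    (hab : a / k ≤ b) (he : -1 ≤ e) (he' : e ≤ 0) : b ^ e ≤ k * a ^ e := by
  have hk0 : (0:ℝ) < k := by linarith
  have h5 : b ^ e ≤ (a / k) ^ e :=
    Real.rpow_le_rpow_of_nonpos (by positivity) hab he'
  have h6 : (a / k : ℝ) ^ e = a ^ e / k ^ e := Real.div_rpow ha.le hk0.le e
  have h7 : (k:ℝ) ^ (-1 : ℝ) ≤ k ^ e := Real.rpow_le_rpow_of_exponent_le hk he
  rw [Real.rpow_neg_one] at h7
  have h8 : 0 < k ^ e := Real.rpow_pos_of_pos hk0 _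
  have h9 : a ^ e / k ^ e ≤ k * a ^ e := by
    rw [div_le_iff₀ h8]
    have h10 := mul_le_mul_of_nonneg_left h7 (by positivity : (0:ℝ) ≤ k * a ^ e)
    have h11 : k * a ^ e * k⁻¹ = a ^ e := by field_simp
    linarith
  calc b ^ e ≤ (a / k) ^ e := h5
    _ = a ^ e / k ^ e := h6
    _ ≤ k * a ^ e := h9

set_option maxHeartbeats 1000000 in
/-- The key pointwise estimate `‖V z₁ - V z₂‖ ≤ K (μ²+‖z₁‖²)^q ‖z₁ - z₂‖`. -/
lemma Vmap_sub_le {n : ℕ} {p μ : ℝ} (hp : 1 < p) (hμ : 0 < μ)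
    (z₁ z₂ : EuclideanSpace ℝ (Fin n)) (h21 : ‖z₂‖ ≤ ‖z₁‖) :
    ‖Vmap μ p z₁ - Vmap μ p z₂‖ ≤
      (8 * |(p - 2) / 4| + 8) * (μ ^ 2 + ‖z₁‖ ^ 2) ^ ((p - 2) / 4) * ‖z₁ - z₂‖ := by
  set q : ℝ := (p - 2) / 4 with hq
  have hqlb : -(1/4 : ℝ) < q := by rw [hq]; linarith
  set a : ℝ := μ ^ 2 + ‖z₁‖ ^ 2 with hadef
  set b : ℝ := μ ^ 2 + ‖z₂‖ ^ 2 with hbdef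
  have hz10 : (0:ℝ) ≤ ‖z₁‖ := norm_nonneg z₁
  have hz20 : (0:ℝ) ≤ ‖z₂‖ := norm_nonneg z₂
  have hsq : ‖z₂‖ ^ 2 ≤ ‖z₁‖ ^ 2 := pow_le_pow_left₀ hz20 h21 2
  have hb : 0 < b := by positivity
  have ha : 0 < a := by positivity
  have hba : b ≤ a := by rw [hadef, hbdef]; linarith
  have haq : 0 < a ^ q := Real.rpow_pos_of_pos ha q
  have hbq : 0 < b ^ q := Real.rpow_pos_of_pos hb q
  have hamul : ∀ r s : ℝ, a ^ r * a ^ s = a ^ (r + s) := fun r s => (Real.rpow_add ha r s).symm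
  have hbmul : ∀ r s : ℝ, b ^ r * b ^ s = b ^ (r + s) := fun r s => (Real.rpow_add hb r s).symm
  set w : EuclideanSpace ℝ (Fin n) := z₁ - z₂ with hwdef
  have hwn : ‖z₁‖ - ‖z₂‖ ≤ ‖w‖ := by
    simpa [hwdef] using norm_sub_norm_le z₁ z₂
  have hw0 : (0:ℝ) ≤ ‖w‖ := norm_nonneg w
  have hsa : ‖z₁‖ ≤ a ^ ((1:ℝ)/2) :=
    le_rpow_half hz10 (by rw [hadef]; linarith [sq_nonneg μ])
  have hsb : ‖z₂‖ ≤ b ^ ((1:ℝ)/2) :=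
    le_rpow_half hz20 (by rw [hbdef]; linarith [sq_nonneg μ])
  have hdiffn : ‖z₁‖ ^ 2 - ‖z₂‖ ^ 2 ≤ 2 * ‖z₁‖ * ‖w‖ := by
    have h1 : (‖z₁‖ + ‖z₂‖) * (‖z₁‖ - ‖z₂‖) ≤ (‖z₁‖ + ‖z₂‖) * ‖w‖ :=
      mul_le_mul_of_nonneg_left hwn (by linarith)
    have h2 : (‖z₁‖ + ‖z₂‖) * ‖w‖ ≤ (2 * ‖z₁‖) * ‖w‖ :=
      mul_le_mul_of_nonneg_right (by linarith) hw0
    calc ‖z₁‖ ^ 2 - ‖z₂‖ ^ 2 = (‖z₁‖ + ‖z₂‖) * (‖z₁‖ - ‖z₂‖) := by ring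
      _ ≤ (‖z₁‖ + ‖z₂‖) * ‖w‖ := h1
      _ ≤ (2 * ‖z₁‖) * ‖w‖ := h2
      _ = 2 * ‖z₁‖ * ‖w‖ := by ring
  have hdecomp : Vmap μ p z₁ - Vmap μ p z₂ = (a ^ q) • w + (a ^ q - b ^ q) • z₂ := by
    rw [hadef, hbdef, hq, hwdef]
    simp only [Vmap]
    module
  have hnorm : ‖Vmap μ p z₁ - Vmap μ p z₂‖ ≤ a ^ q * ‖w‖ + |a ^ q - b ^ q| * ‖z₂‖ := by
    rw [hdecomp]
    refine (norm_add_le _ _).trans ?_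
    rw [norm_smul, norm_smul, Real.norm_eq_abs, Real.norm_eq_abs, abs_of_pos haq]
  have hKfin : ∀ C : ℝ, 0 ≤ C → C ≤ 8 * |q| + 7 →
      C * a ^ q * ‖w‖ ≤ (8 * |q| + 7) * a ^ q * ‖w‖ := fun C hC0 hC =>
    mul_le_mul_of_nonneg_right (mul_le_mul_of_nonneg_right hC haq.le) hw0
  -- main claim : second term bounded
  have hmain : |a ^ q - b ^ q| * ‖z₂‖ ≤ (8 * |q| + 7) * a ^ q * ‖w‖ := by
    have hmvt := rpow_shift_mvt (μ := μ) (q := q) hμ (by positivity : (0:ℝ) ≤ ‖z₂‖ ^ 2) hsq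
    rw [← hadef, ← hbdef] at hmvt
    rcases le_or_gt 1 q with hq1 | hq1
    · -- case q ≥ 1
      have hmax : max (b ^ (q - 1)) (a ^ (q - 1)) = a ^ (q - 1) :=
        max_eq_right (Real.rpow_le_rpow hb.le hba (by linarith))
      rw [hmax] at hmvt
      have haq1 : (0:ℝ) ≤ a ^ (q - 1) := (Real.rpow_pos_of_pos ha _).le
      have hstep : |a ^ q - b ^ q| ≤ |q| * a ^ (q - 1) * (2 * ‖z₁‖ * ‖w‖) :=
        hmvt.trans (mul_le_mul_of_nonneg_left hdiffn (by positivity))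
      have hz1z2a : ‖z₁‖ * ‖z₂‖ ≤ a := by
        have h1 : ‖z₁‖ * ‖z₂‖ ≤ ‖z₁‖ * ‖z₁‖ := mul_le_mul_of_nonneg_left h21 hz10
        have h2 : ‖z₁‖ * ‖z₁‖ = ‖z₁‖ ^ 2 := by ring
        rw [hadef]; linarith [sq_nonneg μ]
      have h3 : a ^ (q - 1) * a = a ^ q := by
        have h := hamul (q - 1) 1
        rw [Real.rpow_one] at h
        rw [h]; norm_num
      calc |a ^ q - b ^ q| * ‖z₂‖
          ≤ |q| * a ^ (q - 1) * (2 * ‖z₁‖ * ‖w‖) * ‖z₂‖ :=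
            mul_le_mul_of_nonneg_right hstep hz20
        _ = 2 * |q| * ‖w‖ * (a ^ (q - 1) * (‖z₁‖ * ‖z₂‖)) := by ring
        _ ≤ 2 * |q| * ‖w‖ * (a ^ (q - 1) * a) := by
            refine mul_le_mul_of_nonneg_left
              (mul_le_mul_of_nonneg_left hz1z2a haq1) (by positivity)
        _ = (2 * |q|) * a ^ q * ‖w‖ := by rw [h3]; ring
        _ ≤ (8 * |q| + 7) * a ^ q * ‖w‖ := hKfin _ (by positivity) (by linarith [abs_nonneg q])
    · -- case q < 1
      have hmax : max (b ^ (q - 1)) (a ^ (q - 1)) = b ^ (q - 1) :=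
        max_eq_left (Real.rpow_le_rpow_of_nonpos hb hba (by linarith))
      rw [hmax] at hmvt
      have hbq1 : (0:ℝ) ≤ b ^ (q - 1) := (Real.rpow_pos_of_pos hb _).le
      have hstep : |a ^ q - b ^ q| ≤ |q| * b ^ (q - 1) * (2 * ‖z₁‖ * ‖w‖) :=
        hmvt.trans (mul_le_mul_of_nonneg_left hdiffn (by positivity))
      have hT : |a ^ q - b ^ q| * ‖z₂‖ ≤ 2 * |q| * (b ^ (q - 1/2) * ‖z₁‖) * ‖w‖ := by
        calc |a ^ q - b ^ q| * ‖z₂‖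
            ≤ (|q| * b ^ (q - 1) * (2 * ‖z₁‖ * ‖w‖)) * (b ^ ((1:ℝ)/2)) :=
              mul_le_mul hstep hsb hz20 (by positivity)
          _ = 2 * |q| * ((b ^ (q - 1) * b ^ ((1:ℝ)/2)) * ‖z₁‖) * ‖w‖ := by ring
          _ = 2 * |q| * (b ^ (q - 1/2) * ‖z₁‖) * ‖w‖ := by
              rw [hbmul, show q - 1 + 1/2 = q - 1/2 from by ring]
      have hhalfq : a ^ (q - 1/2) * a ^ ((1:ℝ)/2) = a ^ q := by
        rw [hamul, show q - 1/2 + 1/2 = q from by ring]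
      rcases le_or_gt (1/2 : ℝ) q with hq2 | hq2
      · -- (ii-a) 1/2 ≤ q < 1
        have h4 : b ^ (q - 1/2) * ‖z₁‖ ≤ a ^ q := by
          calc b ^ (q - 1/2) * ‖z₁‖
              ≤ a ^ (q - 1/2) * (a ^ ((1:ℝ)/2)) :=
                mul_le_mul (Real.rpow_le_rpow hb.le hba (by linarith)) hsa hz10
                  (Real.rpow_pos_of_pos ha _).le
            _ = a ^ q := hhalfq
        calc |a ^ q - b ^ q| * ‖z₂‖ ≤ 2 * |q| * (b ^ (q - 1/2) * ‖z₁‖) * ‖w‖ := hT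
          _ ≤ 2 * |q| * a ^ q * ‖w‖ := mul3_mono (by positivity) hw0 h4
          _ ≤ (8 * |q| + 7) * a ^ q * ‖w‖ := hKfin _ (by positivity) (by linarith [abs_nonneg q])
      · rcases le_or_gt ‖z₁‖ (2 * ‖z₂‖) with hcase | hcase
        · -- (ii-b) : comparable norms
          have hab4 : a / 4 ≤ b := by
            have h1 : ‖z₁‖ ^ 2 ≤ (2 * ‖z₂‖) ^ 2 := pow_le_pow_left₀ hz10 hcase 2
            have h2 : (2 * ‖z₂‖) ^ 2 = 4 * ‖z₂‖ ^ 2 := by ring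
            rw [hadef, hbdef]; linarith [sq_nonneg μ]
          have hb3 : b ^ (q - 1/2) ≤ 4 * a ^ (q - 1/2) :=
            rpow_quarter ha hb (by norm_num) hab4 (by linarith) (by linarith)
          calc |a ^ q - b ^ q| * ‖z₂‖ ≤ 2 * |q| * (b ^ (q - 1/2) * ‖z₁‖) * ‖w‖ := hT
            _ ≤ 2 * |q| * (4 * a ^ q) * ‖w‖ := by
                refine mul3_mono (by positivity) hw0 ?_
                calc b ^ (q - 1/2) * ‖z₁‖ ≤ (4 * a ^ (q - 1/2)) * (a ^ ((1:ℝ)/2)) :=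
                      mul_le_mul hb3 hsa hz10 (by positivity)
                  _ = 4 * (a ^ (q - 1/2) * a ^ ((1:ℝ)/2)) := by ring
                  _ = 4 * a ^ q := by rw [hhalfq]
            _ = (8 * |q|) * a ^ q * ‖w‖ := by ring
            _ ≤ (8 * |q| + 7) * a ^ q * ‖w‖ := hKfin _ (by positivity) (by linarith)
        · -- (ii-c) : ‖z₁‖ < 2‖w‖
          have hz1w : ‖z₁‖ ≤ 2 * ‖w‖ := by linarith
          have haqw : (0:ℝ) ≤ a ^ q * ‖w‖ := mul_nonneg haq.le hw0
          have htri : |a ^ q - b ^ q| ≤ a ^ q + b ^ q := by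
            refine (abs_sub _ _).trans ?_
            rw [abs_of_pos haq, abs_of_pos hbq]
          have hterm1 : a ^ q * ‖z₂‖ ≤ 2 * a ^ q * ‖w‖ := by
            have := mul_le_mul_of_nonneg_left (show ‖z₂‖ ≤ 2 * ‖w‖ by linarith) haq.le
            linarith
          have hterm2 : b ^ q * ‖z₂‖ ≤ 5 * a ^ q * ‖w‖ := by
            rcases le_or_gt 0 q with hq0 | hq0
            · have hba' : b ^ q ≤ a ^ q := Real.rpow_le_rpow hb.le hba hq0
              have := mul_le_mul hba' (show ‖z₂‖ ≤ 2 * ‖w‖ by linarith) hz20 haq.le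
              linarith
            · rcases le_or_gt (μ ^ 2) (‖z₁‖ ^ 2) with hmz | hmz
              · have haw : a ≤ (4 * ‖w‖) ^ 2 := by
                  have h1 : ‖z₁‖ ^ 2 ≤ (2 * ‖w‖) ^ 2 := pow_le_pow_left₀ hz10 hz1w 2
                  have h2 : (2 * ‖w‖) ^ 2 = 4 * ‖w‖ ^ 2 := by ring
                  have h3 : (4 * ‖w‖) ^ 2 = 16 * ‖w‖ ^ 2 := by ring
                  rw [hadef]; linarith
                have ha12 : a ^ ((1:ℝ)/2) ≤ 4 * ‖w‖ := rpow_half_le (by positivity) haw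
                calc b ^ q * ‖z₂‖ ≤ b ^ q * b ^ ((1:ℝ)/2) :=
                      mul_le_mul_of_nonneg_left hsb hbq.le
                  _ = b ^ (q + 1/2) := by
                      rw [hbmul, show q + 1/2 = q + 1/2 from rfl]
                  _ ≤ a ^ (q + 1/2) := Real.rpow_le_rpow hb.le hba (by linarith)
                  _ = a ^ q * a ^ ((1:ℝ)/2) := (hamul q (1/2)).symm
                  _ ≤ a ^ q * (4 * ‖w‖) := mul_le_mul_of_nonneg_left ha12 haq.le
                  _ ≤ 5 * a ^ q * ‖w‖ := by linarith
              · have hab2 : a / 2 ≤ b := by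
                  rw [hadef, hbdef]; linarith [sq_nonneg ‖z₂‖]
                have hb5 : b ^ q ≤ 2 * a ^ q :=
                  rpow_quarter ha hb (by norm_num) hab2 (by linarith) (by linarith)
                calc b ^ q * ‖z₂‖ ≤ (2 * a ^ q) * (2 * ‖w‖) :=
                      mul_le_mul hb5 (by linarith) hz20 (by positivity)
                  _ ≤ 5 * a ^ q * ‖w‖ := by linarith
          calc |a ^ q - b ^ q| * ‖z₂‖ ≤ (a ^ q + b ^ q) * ‖z₂‖ :=
                mul_le_mul_of_nonneg_right htri hz20
            _ = a ^ q * ‖z₂‖ + b ^ q * ‖z₂‖ := by ring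
            _ ≤ 2 * a ^ q * ‖w‖ + 5 * a ^ q * ‖w‖ := by linarith
            _ = 7 * a ^ q * ‖w‖ := by ring
            _ ≤ (8 * |q| + 7) * a ^ q * ‖w‖ := hKfin _ (by positivity) (by linarith [abs_nonneg q])
  calc ‖Vmap μ p z₁ - Vmap μ p z₂‖ ≤ a ^ q * ‖w‖ + |a ^ q - b ^ q| * ‖z₂‖ := hnorm
    _ ≤ a ^ q * ‖w‖ + (8 * |q| + 7) * a ^ q * ‖w‖ := by linarith
    _ = (8 * |q| + 8) * a ^ q * ‖w‖ := by ring

set_option maxHeartbeats 1000000 in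
/-- Lower bound for the monotonicity quantity from uniform ellipticity. -/
lemma grad_lower {n : ℕ} {p ν μ : ℝ} (hp : 1 < p) (hν : 0 < ν) (hμ : 0 < μ)
    (g : EuclideanSpace ℝ (Fin n) → ℝ) (hg : ContDiff ℝ 2 g)
    (hess : ∀ z ξ : EuclideanSpace ℝ (Fin n),
      ν * (μ ^ 2 + ‖z‖ ^ 2) ^ ((p - 2) / 2) * ‖ξ‖ ^ 2 ≤ fderiv ℝ (fderiv ℝ g) z ξ ξ)
    (z₁ z₂ : EuclideanSpace ℝ (Fin n)) (h21 : ‖z₂‖ ≤ ‖z₁‖) :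
    min ((4:ℝ) ^ (-((p - 2) / 2))) ((9:ℝ) ^ ((p - 2) / 2)) / 4 * ν *
        ((μ ^ 2 + ‖z₁‖ ^ 2) ^ ((p - 2) / 2)) * ‖z₁ - z₂‖ ^ 2 ≤
      ⟪gradient g z₁ - gradient g z₂, z₁ - z₂⟫ := by
  set γ : ℝ := (p - 2) / 2 with hγ
  set w : EuclideanSpace ℝ (Fin n) := z₁ - z₂ with hwdef
  set a : ℝ := μ ^ 2 + ‖z₁‖ ^ 2 with hadef
  have ha : 0 < a := by positivity
  have hz10 : (0:ℝ) ≤ ‖z₁‖ := norm_nonneg z₁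
  have hw0 : (0:ℝ) ≤ ‖w‖ := norm_nonneg w
  -- the auxiliary scalar function
  set φ : ℝ → ℝ := fun s => fderiv ℝ g (z₂ + s • w) w with hφdef
  have hF : Differentiable ℝ (fderiv ℝ g) :=
    (hg.fderiv_right (m := 1) (by norm_num)).differentiable (by norm_num)
  have hder : ∀ s : ℝ, HasDerivAt φ (fderiv ℝ (fderiv ℝ g) (z₂ + s • w) w w) s := by
    intro s
    have hline : HasDerivAt (fun s : ℝ => z₂ + s • w) w s := by
      simpa using ((hasDerivAt_id s).smul_const w).const_add z₂
    have h1 : HasFDerivAt (fun x => fderiv ℝ g x w)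
        ((fderiv ℝ (fderiv ℝ g) (z₂ + s • w)).flip w) (z₂ + s • w) := by
      have h0 := ((hF (z₂ + s • w)).hasFDerivAt).clm_apply
        (hasFDerivAt_const w (z₂ + s • w))
      simpa using h0
    have h2 := h1.comp_hasDerivAt s hline
    exact h2
  have hφdiff : Differentiable ℝ φ := fun s => (hder s).differentiableAt
  have hφcont : ∀ S : Set ℝ, ContinuousOn φ S := fun S => hφdiff.continuous.continuousOn
  -- the derivative is nonnegative everywhere
  have hpos : ∀ s : ℝ, 0 ≤ fderiv ℝ (fderiv ℝ g) (z₂ + s • w) w w := by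
    intro s
    refine le_trans ?_ (hess (z₂ + s • w) w)
    positivity
  -- lower bound of the derivative for s ∈ [3/4, 1]
  have hlow : ∀ s : ℝ, 3/4 ≤ s → s ≤ 1 →
      min ((4:ℝ) ^ (-γ)) ((9:ℝ) ^ γ) * ν * a ^ γ * ‖w‖ ^ 2 ≤
        fderiv ℝ (fderiv ℝ g) (z₂ + s • w) w w := by
    intro s hs1 hs2
    refine le_trans ?_ (hess (z₂ + s • w) w)
    set x : ℝ := μ ^ 2 + ‖z₂ + s • w‖ ^ 2 with hxdef
    have hx : 0 < x := by positivity
    have hzs0 : (0:ℝ) ≤ ‖z₂ + s • w‖ := norm_nonneg _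
    have hw2 : ‖w‖ ≤ 2 * ‖z₁‖ := by
      calc ‖w‖ = ‖z₁ - z₂‖ := by rw [hwdef]
        _ ≤ ‖z₁‖ + ‖z₂‖ := norm_sub_le _ _
        _ ≤ 2 * ‖z₁‖ := by linarith
    -- lower bound on ‖z₂ + s•w‖
    have hzrep : z₂ + s • w = z₁ - (1 - s) • w := by
      rw [hwdef]; module
    have hzlow : ‖z₁‖ / 2 ≤ ‖z₂ + s • w‖ := by
      have h1 : ‖z₁‖ - ‖(1 - s) • w‖ ≤ ‖z₁ - (1 - s) • w‖ :=
        norm_sub_norm_le z₁ ((1 - s) • w)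
      have h2 : ‖(1 - s) • w‖ = |1 - s| * ‖w‖ := by
        rw [norm_smul, Real.norm_eq_abs]
      have h3 : |1 - s| ≤ 1/4 := by
        rw [abs_le]; constructor <;> linarith
      have h4 : |1 - s| * ‖w‖ ≤ (1/4) * (2 * ‖z₁‖) := by
        exact mul_le_mul h3 hw2 hw0 (by norm_num)
      rw [hzrep]
      rw [h2] at h1
      linarith
    have hzhigh : ‖z₂ + s • w‖ ≤ 3 * ‖z₁‖ := by
      have h1 : ‖z₂ + s • w‖ ≤ ‖z₂‖ + ‖s • w‖ := norm_add_le _ _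
      have h2 : ‖s • w‖ = |s| * ‖w‖ := by rw [norm_smul, Real.norm_eq_abs]
      have h3 : |s| ≤ 1 := by rw [abs_le]; constructor <;> linarith
      have h4 : |s| * ‖w‖ ≤ 1 * (2 * ‖z₁‖) := mul_le_mul h3 hw2 hw0 (by norm_num)
      linarith
    have hxlow : a / 4 ≤ x := by
      have h5 : (‖z₁‖ / 2) ^ 2 ≤ ‖z₂ + s • w‖ ^ 2 := pow_le_pow_left₀ (by positivity) hzlow 2
      have h6 : (‖z₁‖ / 2) ^ 2 = ‖z₁‖ ^ 2 / 4 := by ring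
      rw [hxdef, hadef]; nlinarith [sq_nonneg μ]
    have hxhigh : x ≤ 9 * a := by
      have h5 : ‖z₂ + s • w‖ ^ 2 ≤ (3 * ‖z₁‖) ^ 2 := pow_le_pow_left₀ hzs0 hzhigh 2
      have h6 : (3 * ‖z₁‖) ^ 2 = 9 * ‖z₁‖ ^ 2 := by ring
      rw [hxdef, hadef]; nlinarith [sq_nonneg μ]
    -- conclude the rpow bound
    have hkey : min ((4:ℝ) ^ (-γ)) ((9:ℝ) ^ γ) * a ^ γ ≤ x ^ γ := by
      rcases le_or_gt 0 γ with hγ0 | hγ0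
      · have h7 : (a / 4) ^ γ ≤ x ^ γ := Real.rpow_le_rpow (by positivity) hxlow hγ0
        have h8 : (a / 4 : ℝ) ^ γ = a ^ γ / 4 ^ γ := Real.div_rpow ha.le (by norm_num) γ
        have h9 : a ^ γ / (4:ℝ) ^ γ = (4:ℝ) ^ (-γ) * a ^ γ := by
          rw [Real.rpow_neg (by norm_num : (0:ℝ) ≤ 4)]
          field_simp
        calc min ((4:ℝ) ^ (-γ)) ((9:ℝ) ^ γ) * a ^ γ ≤ (4:ℝ) ^ (-γ) * a ^ γ :=
              mul_le_mul_of_nonneg_right (min_le_left _ _) (Real.rpow_pos_of_pos ha γ).le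
          _ = a ^ γ / (4:ℝ) ^ γ := h9.symm
          _ = (a / 4) ^ γ := h8.symm
          _ ≤ x ^ γ := h7
      · have h7 : (9 * a) ^ γ ≤ x ^ γ := Real.rpow_le_rpow_of_nonpos hx hxhigh hγ0.le
        have h8 : ((9:ℝ) * a) ^ γ = 9 ^ γ * a ^ γ := Real.mul_rpow (by norm_num) ha.le
        calc min ((4:ℝ) ^ (-γ)) ((9:ℝ) ^ γ) * a ^ γ ≤ (9:ℝ) ^ γ * a ^ γ :=
              mul_le_mul_of_nonneg_right (min_le_right _ _) (Real.rpow_pos_of_pos ha γ).le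
          _ = (9 * a) ^ γ := h8.symm
          _ ≤ x ^ γ := h7
    calc min ((4:ℝ) ^ (-γ)) ((9:ℝ) ^ γ) * ν * a ^ γ * ‖w‖ ^ 2
        = ν * (min ((4:ℝ) ^ (-γ)) ((9:ℝ) ^ γ) * a ^ γ) * ‖w‖ ^ 2 := by ring
      _ ≤ ν * x ^ γ * ‖w‖ ^ 2 := by
          refine mul_le_mul_of_nonneg_right (mul_le_mul_of_nonneg_left hkey hν.le) (by positivity)
  -- mean value theorem on [0, 3/4] and [3/4, 1]
  obtain ⟨s₀, hs₀, hslope₀⟩ := exists_hasDerivAt_eq_slope φ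
    (fun s => fderiv ℝ (fderiv ℝ g) (z₂ + s • w) w w) (by norm_num : (0:ℝ) < 3/4)
    (hφcont _) (fun s _ => hder s)
  obtain ⟨s₁, hs₁, hslope₁⟩ := exists_hasDerivAt_eq_slope φ
    (fun s => fderiv ℝ (fderiv ℝ g) (z₂ + s • w) w w) (by norm_num : (3/4:ℝ) < 1)
    (hφcont _) (fun s _ => hder s)
  have h0 : 0 ≤ φ (3/4) - φ 0 := by
    have := hpos s₀
    rw [hslope₀, le_div_iff₀ (by norm_num : (0:ℝ) < 3/4 - 0)] at this
    linarith [this]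
  have h1 : min ((4:ℝ) ^ (-γ)) ((9:ℝ) ^ γ) / 4 * ν * a ^ γ * ‖w‖ ^ 2 ≤ φ 1 - φ (3/4) := by
    have hlb := hlow s₁ hs₁.1.le hs₁.2.le
    rw [hslope₁] at hlb
    rw [le_div_iff₀ (by norm_num : (0:ℝ) < 1 - 3/4)] at hlb
    linarith [hlb]
  -- identify the endpoints
  have hφ1 : φ 1 = ⟪gradient g z₁, w⟫ := by
    have hz : z₂ + (1:ℝ) • w = z₁ := by rw [hwdef]; module
    rw [hφdef]
    simp only [hz]
    rw [gradient, InnerProductSpace.toDual_symm_apply]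
  have hφ0 : φ 0 = ⟪gradient g z₂, w⟫ := by
    have hz : z₂ + (0:ℝ) • w = z₂ := by rw [hwdef]; module
    rw [hφdef]
    simp only [hz]
    rw [gradient, InnerProductSpace.toDual_symm_apply]
  have hinner : ⟪gradient g z₁ - gradient g z₂, w⟫ = φ 1 - φ 0 := by
    rw [inner_sub_left, hφ1, hφ0]
  calc min ((4:ℝ) ^ (-γ)) ((9:ℝ) ^ γ) / 4 * ν * a ^ γ * ‖w‖ ^ 2
      ≤ φ 1 - φ (3/4) := h1
    _ ≤ φ 1 - φ 0 := by linarith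
    _ = ⟪gradient g z₁ - gradient g z₂, w⟫ := hinner.symm


/-- The monotonicity inequality (53): uniform ellipticity of the Hessian implies
`(∇g(z₁) − ∇g(z₂))·(z₁ − z₂) ≥ c ν |V_{μ,p}(z₁) − V_{μ,p}(z₂)|²` with `c = c(n,p)`. -/
theorem stmt13 (n : ℕ) (hn : 2 ≤ n) (p : ℝ) (hp : 1 < p) :
    ∃ c : ℝ, 0 < c ∧
      ∀ ν : ℝ, 0 < ν →
      ∀ μ : ℝ, μ ∈ Set.Ioc (0 : ℝ) 1 →
      ∀ g : EuclideanSpace ℝ (Fin n) → ℝ, ContDiff ℝ 2 g →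
        (∀ z ξ : EuclideanSpace ℝ (Fin n),
          ν * (μ ^ 2 + ‖z‖ ^ 2) ^ ((p - 2) / 2) * ‖ξ‖ ^ 2 ≤ fderiv ℝ (fderiv ℝ g) z ξ ξ) →
        ∀ z₁ z₂ : EuclideanSpace ℝ (Fin n),
          c * ν * ‖Vmap μ p z₁ - Vmap μ p z₂‖ ^ 2 ≤
            ⟪gradient g z₁ - gradient g z₂, z₁ - z₂⟫ := by
  have hK : (0:ℝ) < 8 * |(p - 2) / 4| + 8 := by positivity
  have hcm : (0:ℝ) < min ((4:ℝ) ^ (-((p - 2) / 2))) ((9:ℝ) ^ ((p - 2) / 2)) :=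
    lt_min (Real.rpow_pos_of_pos (by norm_num) _) (Real.rpow_pos_of_pos (by norm_num) _)
  refine ⟨min ((4:ℝ) ^ (-((p - 2) / 2))) ((9:ℝ) ^ ((p - 2) / 2)) / 4 /
    (8 * |(p - 2) / 4| + 8) ^ 2, by positivity, ?_⟩
  intro ν hν μ hμ g hg hess
  have hμ0 : 0 < μ := hμ.1
  have key : ∀ z₁ z₂ : EuclideanSpace ℝ (Fin n), ‖z₂‖ ≤ ‖z₁‖ →
      min ((4:ℝ) ^ (-((p - 2) / 2))) ((9:ℝ) ^ ((p - 2) / 2)) / 4 /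
          (8 * |(p - 2) / 4| + 8) ^ 2 * ν * ‖Vmap μ p z₁ - Vmap μ p z₂‖ ^ 2 ≤
        ⟪gradient g z₁ - gradient g z₂, z₁ - z₂⟫ := by
    intro z₁ z₂ h21
    have hV := Vmap_sub_le (p := p) (μ := μ) hp hμ0 z₁ z₂ h21
    have hG := grad_lower hp hν hμ0 g hg hess z₁ z₂ h21
    have ha : (0:ℝ) < μ ^ 2 + ‖z₁‖ ^ 2 := by positivity
    have hVsq : ‖Vmap μ p z₁ - Vmap μ p z₂‖ ^ 2 ≤
        (8 * |(p - 2) / 4| + 8) ^ 2 * (μ ^ 2 + ‖z₁‖ ^ 2) ^ ((p - 2) / 2) * ‖z₁ - z₂‖ ^ 2 := by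
      have h1 : ‖Vmap μ p z₁ - Vmap μ p z₂‖ ^ 2 ≤
          ((8 * |(p - 2) / 4| + 8) * (μ ^ 2 + ‖z₁‖ ^ 2) ^ ((p - 2) / 4) * ‖z₁ - z₂‖) ^ 2 :=
        pow_le_pow_left₀ (norm_nonneg _) hV 2
      have h2 : (((μ ^ 2 + ‖z₁‖ ^ 2) : ℝ) ^ ((p - 2) / 4)) ^ 2 =
          (μ ^ 2 + ‖z₁‖ ^ 2) ^ ((p - 2) / 2) := by
        rw [← Real.rpow_natCast ((μ ^ 2 + ‖z₁‖ ^ 2) ^ ((p - 2) / 4)) 2,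
          ← Real.rpow_mul ha.le]
        congr 1
        push_cast
        ring
      calc ‖Vmap μ p z₁ - Vmap μ p z₂‖ ^ 2
          ≤ ((8 * |(p - 2) / 4| + 8) * (μ ^ 2 + ‖z₁‖ ^ 2) ^ ((p - 2) / 4) * ‖z₁ - z₂‖) ^ 2 := h1
        _ = (8 * |(p - 2) / 4| + 8) ^ 2 * (((μ ^ 2 + ‖z₁‖ ^ 2) ^ ((p - 2) / 4)) ^ 2) *
            ‖z₁ - z₂‖ ^ 2 := by ring
        _ = (8 * |(p - 2) / 4| + 8) ^ 2 * (μ ^ 2 + ‖z₁‖ ^ 2) ^ ((p - 2) / 2) * ‖z₁ - z₂‖ ^ 2 := by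
            rw [h2]
    calc min ((4:ℝ) ^ (-((p - 2) / 2))) ((9:ℝ) ^ ((p - 2) / 2)) / 4 /
          (8 * |(p - 2) / 4| + 8) ^ 2 * ν * ‖Vmap μ p z₁ - Vmap μ p z₂‖ ^ 2
        ≤ min ((4:ℝ) ^ (-((p - 2) / 2))) ((9:ℝ) ^ ((p - 2) / 2)) / 4 /
          (8 * |(p - 2) / 4| + 8) ^ 2 * ν *
          ((8 * |(p - 2) / 4| + 8) ^ 2 * (μ ^ 2 + ‖z₁‖ ^ 2) ^ ((p - 2) / 2) * ‖z₁ - z₂‖ ^ 2) :=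
          mul_le_mul_of_nonneg_left hVsq (by positivity)
      _ = min ((4:ℝ) ^ (-((p - 2) / 2))) ((9:ℝ) ^ ((p - 2) / 2)) / 4 * ν *
          (μ ^ 2 + ‖z₁‖ ^ 2) ^ ((p - 2) / 2) * ‖z₁ - z₂‖ ^ 2 := by
          field_simp
      _ ≤ ⟪gradient g z₁ - gradient g z₂, z₁ - z₂⟫ := hG
  intro z₁ z₂
  rcases le_total ‖z₂‖ ‖z₁‖ with h | h
  · exact key z₁ z₂ h
  · have h2 := key z₂ z₁ h
    have e1 : ‖Vmap μ p z₂ - Vmap μ p z₁‖ = ‖Vmap μ p z₁ - Vmap μ p z₂‖ := norm_sub_rev _ _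
    have e2 : ⟪gradient g z₂ - gradient g z₁, z₂ - z₁⟫ =
        ⟪gradient g z₁ - gradient g z₂, z₁ - z₂⟫ := by
      rw [← inner_neg_neg (𝕜 := ℝ)]
      simp
    rw [e1, e2] at h2
    exact h2
end

section
/- Let n ≥ 1, q > 1 and μ ∈ (0,1], and let V : ℝⁿ → ℝⁿ be given by V(z) := (μ² + |z|²)^{(q−2)/4} z. Then V is differentiable and for all z, ξ ∈ ℝⁿ one has |DV(z) ξ|² ≥ min{1, q − 1} (μ² + |z|²)^{(q−2)/2} |ξ|², where DV(z) denotes the Fréchet derivative of V at z. -/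
open Real

lemma stmt14_deriv {n : ℕ} (μ p : ℝ) (hμ : 0 < μ) (z : EuclideanSpace ℝ (Fin n)) :
    HasFDerivAt (fun w : EuclideanSpace ℝ (Fin n) => (μ ^ 2 + ‖w‖ ^ 2) ^ p • w)
      ((μ ^ 2 + ‖z‖ ^ 2) ^ p • ContinuousLinearMap.id ℝ _ +
        ((p * (μ ^ 2 + ‖z‖ ^ 2) ^ (p - 1)) • (2 • innerSL ℝ z)).smulRight z) z := by
  have ha : (0 : ℝ) < μ ^ 2 + ‖z‖ ^ 2 := by positivity
  have h1 : HasFDerivAt (fun w : EuclideanSpace ℝ (Fin n) => ‖w‖ ^ 2) (2 • innerSL ℝ z) z := by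
    simpa using (hasFDerivAt_id z).norm_sq
  have h2 : HasFDerivAt (fun w : EuclideanSpace ℝ (Fin n) => μ ^ 2 + ‖w‖ ^ 2)
      (2 • innerSL ℝ z) z := h1.const_add _
  have h3 : HasDerivAt (fun t : ℝ => t ^ p) (p * (μ ^ 2 + ‖z‖ ^ 2) ^ (p - 1))
      (μ ^ 2 + ‖z‖ ^ 2) := Real.hasDerivAt_rpow_const (Or.inl ha.ne')
  have h4 : HasFDerivAt (fun w : EuclideanSpace ℝ (Fin n) => (μ ^ 2 + ‖w‖ ^ 2) ^ p)
      ((p * (μ ^ 2 + ‖z‖ ^ 2) ^ (p - 1)) • (2 • innerSL ℝ z)) z :=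
    HasDerivAt.comp_hasFDerivAt (h₂ := fun t : ℝ => t ^ p) z h3 h2
  have h5 : HasFDerivAt (fun w : EuclideanSpace ℝ (Fin n) => (μ ^ 2 + ‖w‖ ^ 2) ^ p • w)
      ((μ ^ 2 + ‖z‖ ^ 2) ^ p • ContinuousLinearMap.id ℝ _ +
        ((p * (μ ^ 2 + ‖z‖ ^ 2) ^ (p - 1)) • (2 • innerSL ℝ z)).smulRight z) z :=
    h4.smul (hasFDerivAt_id z)
  exact h5

lemma stmt14_arith (p a B s X Z m : ℝ) (ha : 0 < a) (hB : 0 < B) (hX : 0 ≤ X)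
    (hZ : 0 ≤ Z) (hCS : s ^ 2 ≤ Z * X) (hZa : Z ≤ a) (hm1 : m ≤ 1)
    (hmq : p < 0 → m ≤ 4 * p + 1) :
    m * (B * a * (B * a)) * X ≤
      (B * a) ^ 2 * X + 2 * ((B * a) * (2 * p * B * s) * s) + (2 * p * B * s) ^ 2 * Z := by
  have t3 : 0 ≤ (2 * p * B * s) ^ 2 * Z := mul_nonneg (sq_nonneg _) hZ
  rcases le_or_gt 0 p with hp0 | hp0
  · have t2 : 0 ≤ 2 * ((B * a) * (2 * p * B * s) * s) := by
      nlinarith [mul_nonneg (mul_nonneg (mul_nonneg hp0 hB.le) (mul_nonneg hB.le ha.le))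
        (sq_nonneg s)]
    nlinarith [mul_nonneg (sq_nonneg (B * a)) hX]
  · have hm := hmq hp0
    have hst : s ^ 2 ≤ a * X := hCS.trans (by nlinarith)
    have key : 0 ≤ (-(4 * p)) * (B * B * a) * (a * X - s ^ 2) := by
      apply mul_nonneg
      · apply mul_nonneg (by linarith) (by positivity)
      · linarith
    have hmle : m * (B * a * (B * a)) * X ≤ (4 * p + 1) * (B * a * (B * a)) * X := by
      have h0 : 0 ≤ (B * a * (B * a)) * X := mul_nonneg (by positivity) hX
      nlinarith
    nlinarith [key, t3]

/-- Display (49): for `V(z) = (μ² + |z|²)^{(q−2)/4} z` one has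
`|DV(z)ξ|² ≥ min{1, q−1} (μ² + |z|²)^{(q−2)/2} |ξ|²`. -/
theorem stmt14 (n : ℕ) (hn : 1 ≤ n) (q μ : ℝ) (hq : 1 < q) (hμ : μ ∈ Set.Ioc (0 : ℝ) 1)
    (V : EuclideanSpace ℝ (Fin n) → EuclideanSpace ℝ (Fin n))
    (hV : ∀ z, V z = (μ ^ 2 + ‖z‖ ^ 2) ^ ((q - 2) / 4) • z) :
    Differentiable ℝ V ∧
      ∀ z ξ : EuclideanSpace ℝ (Fin n),
        min 1 (q - 1) * (μ ^ 2 + ‖z‖ ^ 2) ^ ((q - 2) / 2) * ‖ξ‖ ^ 2 ≤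
          ‖fderiv ℝ V z ξ‖ ^ 2 := by
  have hμ0 : 0 < μ := hμ.1
  set p : ℝ := (q - 2) / 4 with hp
  have hVfun : V = fun w : EuclideanSpace ℝ (Fin n) => (μ ^ 2 + ‖w‖ ^ 2) ^ p • w := by
    funext w; exact hV w
  have hder : ∀ z : EuclideanSpace ℝ (Fin n),
      HasFDerivAt V ((μ ^ 2 + ‖z‖ ^ 2) ^ p • ContinuousLinearMap.id ℝ _ +
        ((p * (μ ^ 2 + ‖z‖ ^ 2) ^ (p - 1)) • (2 • innerSL ℝ z)).smulRight z) z := by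
    intro z; rw [hVfun]; exact stmt14_deriv μ p hμ0 z
  refine ⟨fun z => (hder z).differentiableAt, fun z ξ => ?_⟩
  have ha : (0 : ℝ) < μ ^ 2 + ‖z‖ ^ 2 := by positivity
  set a : ℝ := μ ^ 2 + ‖z‖ ^ 2 with hadef
  set B : ℝ := a ^ (p - 1) with hB
  have hB0 : 0 < B := Real.rpow_pos_of_pos ha _
  have hBa : a ^ p = B * a := by
    rw [hB, ← Real.rpow_add_one ha.ne' (p - 1)]; ring_nf
  have h2p : a ^ ((q - 2) / 2) = (B * a) * (B * a) := by
    rw [← hBa, ← Real.rpow_add ha]; congr 1; rw [hp]; ring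
  rw [(hder z).fderiv]
  set s : ℝ := (inner ℝ z ξ : ℝ) with hs
  have happ : (((a : ℝ) ^ p • ContinuousLinearMap.id ℝ _ +
      ((p * a ^ (p - 1)) • (2 • innerSL ℝ z)).smulRight z) : _ →L[ℝ] _) ξ
      = (B * a) • ξ + (2 * p * B * s) • z := by
    simp [hBa, ← hB, hs]
    module
  rw [happ]
  have hsc : (inner ℝ ξ z : ℝ) = s := by rw [real_inner_comm]
  have hexp : ‖(B * a) • ξ + (2 * p * B * s) • z‖ ^ 2 =
      (B * a) ^ 2 * ‖ξ‖ ^ 2 + 2 * ((B * a) * (2 * p * B * s) * s) +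
        (2 * p * B * s) ^ 2 * ‖z‖ ^ 2 := by
    rw [@norm_add_sq_real]
    rw [real_inner_smul_left, real_inner_smul_right, hsc, norm_smul, norm_smul]
    simp [mul_pow, sq_abs]
    ring
  rw [hexp]
  have hCS : s ^ 2 ≤ ‖z‖ ^ 2 * ‖ξ‖ ^ 2 := by
    have := real_inner_mul_inner_self_le z ξ
    rw [real_inner_self_eq_norm_sq, real_inner_self_eq_norm_sq] at this
    calc s ^ 2 = s * s := sq s
      _ ≤ _ := by simpa [mul_pow] using this
  have hza : ‖z‖ ^ 2 ≤ a := by rw [hadef]; nlinarith [sq_nonneg μ]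
  have hxi : (0 : ℝ) ≤ ‖ξ‖ ^ 2 := sq_nonneg _
  rw [h2p]
  clear_value s B a p
  exact stmt14_arith p a B s (‖ξ‖ ^ 2) (‖z‖ ^ 2) (min 1 (q - 1)) ha hB0 hxi (sq_nonneg ‖z‖)
    hCS hza (min_le_left _ _)
    (fun h => by
      have : q - 1 = 4 * p + 1 := by rw [hp]; ring
      rw [← this]; exact min_le_right _ _)
end
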